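/- arXiv:2401.02638 — 5 statements merged into one kernel-verified Lean document; each statement's English description precedes it below -/
import Mathlib

section
/- Let α > 0 and let Y be a Poisson random variable with parameter α, with (Y_j)_{j≥1} mutually independent copies of Y, S_0 = 0, S_k = Y_1 + ⋯ + Y_k. Then for every n ≥ 0 and every real x, F^Y_{n,λ}(x) = Σ_{i=0}^{n} F_i(x) · {n ⎨ i}_λ · α^i, where F_i(x) are the Fubini polynomials and {n ⎨ i}_λ the degenerate Stirling numbers of the second kind. -/
open MeasureTheory ProbabilityTheory Finset

/-- The degenerate falling factorial `(x)_{n,lam} = prod_{j=0}^{n-1} (x - j*lam)`. -/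
noncomputable def degFallingFactorial (lam : ℝ) (n : ℕ) (x : ℝ) : ℝ :=
  ∏ j ∈ Finset.range n, (x - j * lam)

/-- The partial sums `S_k = Y_0 + ⋯ + Y_{k-1}` (so `S_0 = 0`). -/
noncomputable def partialSum {Ω : Type*} (Y : ℕ → Ω → ℝ) (k : ℕ) (ω : Ω) : ℝ :=
  ∑ j ∈ Finset.range k, Y j ω

/-- The probabilistic degenerate Stirling numbers of the second kind associated with `Y`. -/
noncomputable def probDegStirling2 {Ω : Type*} [MeasurableSpace Ω] (μ : Measure Ω)
    (Y : ℕ → Ω → ℝ) (lam : ℝ) (n k : ℕ) : ℝ :=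
  (1 / k.factorial : ℝ) *
    ∑ j ∈ Finset.range (k + 1),
      (-1 : ℝ) ^ (k - j) * k.choose j * ∫ ω, degFallingFactorial lam n (partialSum Y j ω) ∂μ

/-- The probabilistic degenerate Fubini polynomials associated with `Y`. -/
noncomputable def probDegFubini {Ω : Type*} [MeasurableSpace Ω] (μ : Measure Ω)
    (Y : ℕ → Ω → ℝ) (lam : ℝ) (n : ℕ) (x : ℝ) : ℝ :=
  ∑ k ∈ Finset.range (n + 1), probDegStirling2 μ Y lam n k * k.factorial * x ^ k

/-- The degenerate Stirling numbers of the second kind. -/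
noncomputable def degStirling2 (lam : ℝ) (n i : ℕ) : ℝ :=
  (1 / i.factorial : ℝ) *
    ∑ j ∈ Finset.range (i + 1), (-1 : ℝ) ^ (i - j) * i.choose j * degFallingFactorial lam n j

/-- The classical Stirling numbers of the second kind. -/
noncomputable def stirling2 (n k : ℕ) : ℝ :=
  (1 / k.factorial : ℝ) *
    ∑ j ∈ Finset.range (k + 1), (-1 : ℝ) ^ (k - j) * k.choose j * (j : ℝ) ^ n

/-- The Fubini polynomials `F_n(x) = ∑_{k=0}^n S(n,k) k! x^k`. -/
noncomputable def fubiniPoly (n : ℕ) (x : ℝ) : ℝ :=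
  ∑ k ∈ Finset.range (n + 1), stirling2 n k * k.factorial * x ^ k

private lemma alt_sum (N : ℕ) :
    ∑ s ∈ range (N + 1), (-1 : ℝ) ^ s * N.choose s = if N = 0 then 1 else 0 := by
  have h := Int.alternating_sum_range_choose (n := N)
  have h2 : ((∑ i ∈ range (N + 1), (-1 : ℤ) ^ i * N.choose i : ℤ) : ℝ)
      = ((if N = 0 then 1 else 0 : ℤ) : ℝ) := by exact_mod_cast h
  push_cast at h2
  rw [← h2]

private lemma neg_one_pow_sub (N s : ℕ) (h : s ≤ N) :
    (-1 : ℝ) ^ (N - s) = (-1 : ℝ) ^ N * (-1 : ℝ) ^ s := by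
  have h1 : ((-1 : ℝ)) ^ (N - s) * (-1 : ℝ) ^ s = (-1 : ℝ) ^ N := by
    rw [← pow_add]; congr 1; omega
  have h2 : ((-1 : ℝ)) ^ s * (-1 : ℝ) ^ s = 1 := by
    rw [← mul_pow]; norm_num
  rw [← h1, mul_assoc, h2, mul_one]

private lemma alt_sum' (N : ℕ) :
    ∑ s ∈ range (N + 1), (-1 : ℝ) ^ (N - s) * N.choose s = if N = 0 then 1 else 0 := by
  have : ∀ s ∈ range (N + 1), (-1 : ℝ) ^ (N - s) * N.choose s
      = (-1 : ℝ) ^ N * ((-1 : ℝ) ^ s * N.choose s) := by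
    intro s hs
    rw [neg_one_pow_sub N s (by simpa [Nat.lt_succ_iff] using hs)]
    ring
  rw [sum_congr rfl this, ← mul_sum, alt_sum]
  by_cases h : N = 0
  · subst h; norm_num
  · simp [h]

private lemma key_orth (k t : ℕ) :
    ∑ j ∈ range (k + 1), (-1 : ℝ) ^ (k - j) * k.choose j * j.choose t
      = if t = k then 1 else 0 := by
  by_cases ht : k < t
  · rw [if_neg (by omega), Finset.sum_eq_zero]
    intro j hj
    simp only [mem_range, Nat.lt_succ_iff] at hj
    have hjt : j < t := by omega
    rw [Nat.choose_eq_zero_of_lt hjt]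
    ring
  · push_neg at ht
    rw [range_eq_Ico, ← Finset.sum_Ico_consecutive _ (Nat.zero_le t) (by omega : t ≤ k + 1)]
    have h1 : ∑ j ∈ Ico 0 t, (-1 : ℝ) ^ (k - j) * k.choose j * j.choose t = 0 := by
      apply Finset.sum_eq_zero
      intro j hj
      simp only [mem_Ico] at hj
      have hjt : j < t := hj.2
      rw [Nat.choose_eq_zero_of_lt hjt]
      ring
    rw [h1, zero_add, Finset.sum_Ico_eq_sum_range]
    have h2 : ∀ i ∈ range (k + 1 - t), (-1 : ℝ) ^ (k - (t + i)) * k.choose (t + i) * (t + i).choose t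
        = (k.choose t : ℝ) * ((-1 : ℝ) ^ ((k - t) - i) * (k - t).choose i) := by
      intro i hi
      have hik : t + i ≤ k := by simp at hi; omega
      have hcc : k.choose (t + i) * (t + i).choose t = k.choose t * (k - t).choose i := by
        have := Nat.choose_mul (n := k) (k := t + i) (s := t) (Nat.le_add_right t i)
        simpa using this
      have hcast : (k.choose (t + i) : ℝ) * (t + i).choose t = (k.choose t : ℝ) * (k - t).choose i := by
        exact_mod_cast congrArg (fun z : ℕ => (z : ℝ)) hcc
      have hpow : k - (t + i) = (k - t) - i := by omega
      rw [hpow, mul_assoc, hcast]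
      ring
    rw [sum_congr rfl h2, ← mul_sum]
    have h3 : k + 1 - t = (k - t) + 1 := by omega
    rw [h3, alt_sum']
    by_cases htk : t = k
    · subst htk; simp
    · rw [if_neg (by omega), if_neg htk, mul_zero]

/-- `f` agrees on `ℕ` with a linear combination of binomial coefficients of degree `≤ d`. -/
def IsBinomPoly (d : ℕ) (f : ℕ → ℝ) : Prop :=
  ∃ c : ℕ → ℝ, ∀ j : ℕ, f j = ∑ t ∈ range (d + 1), c t * (j.choose t : ℝ)

lemma jchoose (j t : ℕ) :
    (j : ℝ) * j.choose t = (t + 1) * j.choose (t + 1) + t * j.choose t := by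
  by_cases h : t ≤ j
  · have h1 := Nat.choose_succ_right_eq j t
    have h2 : (j.choose (t + 1) : ℝ) * (t + 1) = j.choose t * ((j : ℝ) - t) := by
      have := congrArg (fun z : ℕ => (z : ℝ)) h1
      push_cast [h] at this
      exact this
    nlinarith [h2]
  · push_neg at h
    rw [Nat.choose_eq_zero_of_lt h, Nat.choose_eq_zero_of_lt (by omega)]
    simp

lemma IsBinomPoly.congr {d : ℕ} {f g : ℕ → ℝ} (h : IsBinomPoly d f) (hfg : ∀ j, f j = g j) :
    IsBinomPoly d g := by
  obtain ⟨c, hc⟩ := h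
  exact ⟨c, fun j => (hfg j) ▸ hc j⟩

lemma IsBinomPoly.mul_linear {d : ℕ} {f : ℕ → ℝ} (h : IsBinomPoly d f) (a : ℝ) :
    IsBinomPoly (d + 1) (fun j => ((j : ℝ) - a) * f j) := by
  obtain ⟨c, hc⟩ := h
  refine ⟨fun s => (if s = 0 then 0 else s * c (s - 1)) + (if s ≤ d then ((s : ℝ) - a) * c s else 0),
    fun j => ?_⟩
  have hsplit : ∑ s ∈ range (d + 1 + 1),
      ((if s = 0 then (0:ℝ) else s * c (s - 1)) + (if s ≤ d then ((s : ℝ) - a) * c s else 0))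
        * (j.choose s : ℝ)
      = (∑ s ∈ range (d + 2), (if s = 0 then (0:ℝ) else s * c (s - 1)) * j.choose s)
        + ∑ s ∈ range (d + 2), (if s ≤ d then ((s : ℝ) - a) * c s else 0) * j.choose s := by
    rw [← Finset.sum_add_distrib]
    exact Finset.sum_congr rfl fun s _ => by ring
  show ((j : ℝ) - a) * f j = _
  rw [hc, hsplit]
  have hA : ∑ s ∈ range (d + 2), (if s = 0 then (0:ℝ) else s * c (s - 1)) * j.choose s
      = ∑ t ∈ range (d + 1), ((t : ℝ) + 1) * c t * j.choose (t + 1) := by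
    rw [Finset.sum_range_succ' (fun s => (if s = 0 then (0:ℝ) else s * c (s - 1)) * j.choose s) (d + 1)]
    simp only [if_neg (Nat.succ_ne_zero _), Nat.add_sub_cancel, if_pos rfl]
    push_cast
    ring_nf
  have hB : ∑ s ∈ range (d + 2), (if s ≤ d then ((s : ℝ) - a) * c s else 0) * j.choose s
      = ∑ s ∈ range (d + 1), ((s : ℝ) - a) * c s * j.choose s := by
    rw [Finset.sum_range_succ, if_neg (by omega), zero_mul, add_zero]
    exact Finset.sum_congr rfl fun s hs => by
      rw [if_pos (by simp [Nat.lt_succ_iff] at hs; omega)]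
  rw [hA, hB, Finset.mul_sum, ← Finset.sum_add_distrib]
  exact Finset.sum_congr rfl fun t _ => by
    linear_combination (c t) * jchoose j t

lemma isBinomPoly_degFF (lam : ℝ) (n : ℕ) :
    IsBinomPoly n (fun j : ℕ => degFallingFactorial lam n j) := by
  induction n with
  | zero => exact ⟨fun _ => 1, fun j => by simp [degFallingFactorial]⟩
  | succ n ih =>
      have := (ih.mul_linear ((n : ℝ) * lam)).congr
        (g := fun j : ℕ => degFallingFactorial lam (n + 1) j) ?_
      · exact this
      · intro j
        simp only [degFallingFactorial, Finset.prod_range_succ]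
        ring

lemma isBinomPoly_pow (i : ℕ) : IsBinomPoly i (fun j : ℕ => (j : ℝ) ^ i) := by
  induction i with
  | zero => exact ⟨fun _ => 1, fun j => by simp⟩
  | succ i ih =>
      have := (ih.mul_linear 0).congr (g := fun j : ℕ => (j : ℝ) ^ (i + 1)) ?_
      · exact this
      · intro j; show _ = (j:ℝ) ^ (i+1); rw [pow_succ]; ring

lemma diff_eq {d : ℕ} {f : ℕ → ℝ} {c : ℕ → ℝ}
    (hc : ∀ j : ℕ, f j = ∑ t ∈ range (d + 1), c t * (j.choose t : ℝ)) (k : ℕ) :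
    ∑ j ∈ range (k + 1), (-1 : ℝ) ^ (k - j) * k.choose j * f j
      = if k ≤ d then c k else 0 := by
  have h1 : ∀ j ∈ range (k + 1), (-1 : ℝ) ^ (k - j) * k.choose j * f j
      = ∑ t ∈ range (d + 1), c t * ((-1 : ℝ) ^ (k - j) * k.choose j * j.choose t) := by
    intro j _
    rw [hc j, Finset.mul_sum]
    exact Finset.sum_congr rfl fun t _ => by ring
  rw [Finset.sum_congr rfl h1, Finset.sum_comm]
  have h2 : ∀ t ∈ range (d + 1),
      ∑ j ∈ range (k + 1), c t * ((-1 : ℝ) ^ (k - j) * k.choose j * j.choose t)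
      = if t = k then c t else 0 := by
    intro t _
    rw [← Finset.mul_sum, key_orth]
    split <;> simp
  rw [Finset.sum_congr rfl h2, Finset.sum_ite_eq' (range (d + 1))]
  simp [Nat.lt_succ_iff]

lemma stirling2_vanish {i k : ℕ} (h : i < k) : stirling2 i k = 0 := by
  obtain ⟨c, hc⟩ := isBinomPoly_pow i
  unfold stirling2
  rw [diff_eq hc, if_neg (by omega), mul_zero]

lemma degFF_expand (lam : ℝ) (n : ℕ) (m : ℕ) :
    degFallingFactorial lam n m
      = ∑ t ∈ range (n + 1), (t.factorial : ℝ) * degStirling2 lam n t * m.choose t := by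
  obtain ⟨c, hc⟩ := isBinomPoly_degFF lam n
  have hck : ∀ t, t ≤ n → (t.factorial : ℝ) * degStirling2 lam n t = c t := by
    intro t ht
    unfold degStirling2
    rw [diff_eq hc, if_pos ht]
    have : (t.factorial : ℝ) ≠ 0 := Nat.cast_ne_zero.mpr t.factorial_ne_zero
    field_simp
  rw [show degFallingFactorial lam n (m : ℝ) = ∑ t ∈ range (n + 1), c t * (m.choose t : ℝ) from hc m]
  exact Finset.sum_congr rfl fun t ht => by
    rw [hck t (by simp [Nat.lt_succ_iff] at ht; omega)]

/-- Poisson pmf. -/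
noncomputable def poisPMF (β : ℝ) (m : ℕ) : ℝ := Real.exp (-β) * β ^ m / m.factorial

lemma poisPMF_nonneg {β : ℝ} (hβ : 0 ≤ β) (m : ℕ) : 0 ≤ poisPMF β m := by
  unfold poisPMF; positivity

lemma hasSum_exp_series (β : ℝ) : HasSum (fun m : ℕ => β ^ m / m.factorial) (Real.exp β) := by
  rw [Real.exp_eq_exp_ℝ]
  exact NormedSpace.expSeries_div_hasSum_exp β

lemma poisPMF_hasSum (β : ℝ) : HasSum (poisPMF β) 1 := by
  have h := (hasSum_exp_series β).mul_left (Real.exp (-β))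
  have : Real.exp (-β) * Real.exp β = 1 := by
    rw [← Real.exp_add]; simp
  rw [this] at h
  refine h.congr_fun fun m => ?_
  unfold poisPMF
  ring

lemma poisPMF_conv (β γ : ℝ) (m : ℕ) :
    ∑ a ∈ range (m + 1), poisPMF β a * poisPMF γ (m - a) = poisPMF (β + γ) m := by
  have key : ∀ a ∈ range (m + 1), poisPMF β a * poisPMF γ (m - a)
      = Real.exp (-(β + γ)) / m.factorial * (β ^ a * γ ^ (m - a) * m.choose a) := by
    intro a ha
    simp only [mem_range, Nat.lt_succ_iff] at ha
    have hfac : (m.choose a : ℝ) * a.factorial * (m - a).factorial = m.factorial := by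
      exact_mod_cast congrArg (fun z : ℕ => (z : ℝ)) (Nat.choose_mul_factorial_mul_factorial ha)
    unfold poisPMF
    have ha0 : (a.factorial : ℝ) ≠ 0 := Nat.cast_ne_zero.mpr a.factorial_ne_zero
    have hma0 : ((m - a).factorial : ℝ) ≠ 0 := Nat.cast_ne_zero.mpr (m - a).factorial_ne_zero
    have hm0 : (m.factorial : ℝ) ≠ 0 := Nat.cast_ne_zero.mpr m.factorial_ne_zero
    have hexp : Real.exp (-(β + γ)) = Real.exp (-β) * Real.exp (-γ) := by
      rw [← Real.exp_add]; congr 1; ring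
    have hch : (m.choose a : ℝ) = m.factorial / (a.factorial * (m - a).factorial) := by
      field_simp
      linear_combination hfac
    rw [hexp, hch]
    field_simp
  rw [Finset.sum_congr rfl key, ← Finset.mul_sum, ← add_pow]
  unfold poisPMF
  ring

lemma poisPMF_choose_hasSum {β : ℝ} (t : ℕ) :
    HasSum (fun m : ℕ => poisPMF β m * m.choose t) (poisPMF β t * Real.exp β) := by
  have hinj : Function.Injective (fun s : ℕ => s + t) := add_left_injective t
  have hvanish : ∀ m : ℕ, m ∉ Set.range (fun s : ℕ => s + t) →
      poisPMF β m * m.choose t = 0 := by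
    intro m hm
    have hmt : m < t := by
      by_contra h
      exact hm ⟨m - t, by show m - t + t = m; omega⟩
    rw [Nat.choose_eq_zero_of_lt hmt]
    simp
  rw [← Function.Injective.hasSum_iff hinj hvanish]
  have hcomp : ∀ s : ℕ, poisPMF β (s + t) * ((s + t).choose t : ℝ)
      = (poisPMF β t) * (β ^ s / s.factorial) := by
    intro s
    have hfac : ((s + t).choose t : ℝ) * t.factorial * s.factorial = (s + t).factorial := by
      have := Nat.choose_mul_factorial_mul_factorial (Nat.le_add_left t s)
      rw [show s + t - t = s by omega] at this
      exact_mod_cast congrArg (fun z : ℕ => (z : ℝ)) this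
    unfold poisPMF
    have h1 : (t.factorial : ℝ) ≠ 0 := Nat.cast_ne_zero.mpr t.factorial_ne_zero
    have h2 : (s.factorial : ℝ) ≠ 0 := Nat.cast_ne_zero.mpr s.factorial_ne_zero
    have h3 : (((s+t).factorial : ℕ) : ℝ) ≠ 0 := Nat.cast_ne_zero.mpr (s+t).factorial_ne_zero
    field_simp
    rw [pow_add]
    linear_combination (β ^ s * β ^ t) * hfac
  have hfun : ((fun m : ℕ => poisPMF β m * (m.choose t : ℝ)) ∘ (fun s : ℕ => s + t))
      = fun s : ℕ => poisPMF β t * (β ^ s / s.factorial) := by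
    funext s
    exact hcomp s
  rw [hfun]
  exact (hasSum_exp_series β).mul_left _

lemma poisPMF_choose_tsum {β : ℝ} (t : ℕ) :
    ∑' m : ℕ, poisPMF β m * m.choose t = β ^ t / t.factorial := by
  rw [(poisPMF_choose_hasSum t).tsum_eq]
  unfold poisPMF
  rw [div_mul_eq_mul_div, mul_comm (Real.exp (-β)) (β ^ t), mul_assoc, ← Real.exp_add]
  simp

lemma full_measure_of_pmf {Ω : Type*} [MeasurableSpace Ω] (μ : Measure Ω) (X : Ω → ℝ) (q : ℕ → ℝ) (hq1 : HasSum q 1) (hq0 : ∀ m, 0 ≤ q m)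
    (hX : Measurable X)
    (h : ∀ m : ℕ, μ {ω | X ω = m} = ENNReal.ofReal (q m)) :
    μ (⋃ m : ℕ, X ⁻¹' {(m : ℝ)}) = 1 := by
  have hdisj : Pairwise (Function.onFun Disjoint fun m : ℕ => X ⁻¹' {(m : ℝ)}) := by
    intro a b hab
    refine Set.disjoint_left.mpr fun ω ha hb => ?_
    simp only [Set.mem_preimage, Set.mem_singleton_iff] at ha hb
    exact hab (Nat.cast_injective (ha ▸ hb))
  have hmeas : ∀ m : ℕ, MeasurableSet (X ⁻¹' {(m : ℝ)}) := fun m => hX (measurableSet_singleton _)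
  rw [measure_iUnion hdisj hmeas]
  have heq : ∀ m : ℕ, μ (X ⁻¹' {(m : ℝ)}) = ENNReal.ofReal (q m) := by
    intro m
    rw [← h m]
    rfl
  rw [tsum_congr heq, ← ENNReal.ofReal_tsum_of_nonneg hq0 hq1.summable, hq1.tsum_eq]
  simp

lemma law_of_pmf {Ω : Type*} [MeasurableSpace Ω] (μ : Measure Ω) [IsProbabilityMeasure μ] (X : Ω → ℝ) (q : ℕ → ℝ) (hq1 : HasSum q 1) (hq0 : ∀ m, 0 ≤ q m)
    (hX : Measurable X)
    (h : ∀ m : ℕ, μ {ω | X ω = m} = ENNReal.ofReal (q m)) :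
    μ.map X = Measure.sum (fun m : ℕ => ENNReal.ofReal (q m) • Measure.dirac (m : ℝ)) := by
  ext s hs
  rw [Measure.map_apply hX hs, Measure.sum_apply _ hs]
  have hU := full_measure_of_pmf μ X q hq1 hq0 hX h
  have hUc : μ (⋃ m : ℕ, X ⁻¹' {(m : ℝ)})ᶜ = 0 := by
    rw [measure_compl (MeasurableSet.iUnion fun m => hX (measurableSet_singleton _))
      (measure_ne_top μ _), hU]
    simp
  have h1 : μ (X ⁻¹' s) = μ (X ⁻¹' s ∩ ⋃ m : ℕ, X ⁻¹' {(m : ℝ)}) :=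
    (measure_inter_conull hUc).symm
  rw [h1, Set.inter_iUnion]
  have hdisj : Pairwise (Function.onFun Disjoint fun m : ℕ => X ⁻¹' s ∩ X ⁻¹' {(m : ℝ)}) := by
    intro a b hab
    refine Set.disjoint_left.mpr fun ω ha hb => ?_
    simp only [Set.mem_inter_iff, Set.mem_preimage, Set.mem_singleton_iff] at ha hb
    exact hab (Nat.cast_injective (ha.2 ▸ hb.2))
  rw [measure_iUnion hdisj fun m =>
    (hX hs).inter (hX (measurableSet_singleton _))]
  refine tsum_congr fun m => ?_
  rw [Measure.smul_apply, Measure.dirac_apply' _ hs]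
  by_cases hms : (m : ℝ) ∈ s
  · have : X ⁻¹' s ∩ X ⁻¹' {(m : ℝ)} = X ⁻¹' {(m : ℝ)} := by
      apply Set.inter_eq_self_of_subset_right
      intro ω hω
      simp only [Set.mem_preimage, Set.mem_singleton_iff] at hω
      simp [Set.mem_preimage, hω, hms]
    rw [this, show μ (X ⁻¹' {(m : ℝ)}) = ENNReal.ofReal (q m) from h m]
    simp [Set.indicator_of_mem hms]
  · have : X ⁻¹' s ∩ X ⁻¹' {(m : ℝ)} = ∅ := by
      ext ω
      simp only [Set.mem_inter_iff, Set.mem_preimage, Set.mem_singleton_iff, Set.mem_empty_iff_false,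
        iff_false, not_and]
      intro h1 h2
      exact hms (h2 ▸ h1)
    rw [this]
    simp [Set.indicator_of_notMem hms]

lemma integral_of_pmf {Ω : Type*} [MeasurableSpace Ω] (μ : Measure Ω) (X : Ω → ℝ) (q : ℕ → ℝ) (hq0 : ∀ m, 0 ≤ q m)
    (hX : Measurable X) {f : ℝ → ℝ} (hf : Measurable f)
    (hlaw : μ.map X = Measure.sum (fun m : ℕ => ENNReal.ofReal (q m) • Measure.dirac (m : ℝ)))
    (hsum : Summable (fun m : ℕ => q m * |f m|)) :
    ∫ ω, f (X ω) ∂μ = ∑' m : ℕ, q m * f m := by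
  set ν : Measure ℝ := Measure.sum (fun m : ℕ => ENNReal.ofReal (q m) • Measure.dirac (m : ℝ)) with hν
  have hint : Integrable f ν := by
    constructor
    · exact hf.aestronglyMeasurable
    · rw [HasFiniteIntegral, hν, lintegral_sum_measure]
      have hterm : ∀ m : ℕ, ∫⁻ a, ‖f a‖ₑ ∂(ENNReal.ofReal (q m) • Measure.dirac (m : ℝ))
          = ENNReal.ofReal (q m * |f m|) := by
        intro m
        rw [lintegral_smul_measure, lintegral_dirac' _ hf.enorm]
        rw [ENNReal.ofReal_mul (hq0 m)]
        congr 1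
        rw [← ofReal_norm, Real.norm_eq_abs]
      rw [tsum_congr hterm, ← ENNReal.ofReal_tsum_of_nonneg
        (fun m => mul_nonneg (hq0 m) (abs_nonneg _)) hsum]
      exact ENNReal.ofReal_lt_top
  rw [← integral_map hX.aemeasurable hf.aestronglyMeasurable, hlaw]
  rw [hν] at hint
  rw [integral_sum_measure hint]
  refine tsum_congr fun m => ?_
  rw [integral_smul_measure, integral_dirac, ENNReal.toReal_ofReal (hq0 m), smul_eq_mul]

lemma partialSum_law {Ω : Type*} [MeasurableSpace Ω] (μ : Measure Ω) [IsProbabilityMeasure μ]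
    (Y : ℕ → Ω → ℝ) (hmeas : ∀ j, Measurable (Y j))
    (hindep : iIndepFun Y μ)
    (α : ℝ) (hα : 0 ≤ α)
    (hpmf : ∀ j m : ℕ, μ {ω | Y j ω = m} = ENNReal.ofReal (poisPMF α m))
    (k : ℕ) : ∀ m : ℕ, μ {ω | partialSum Y k ω = m} = ENNReal.ofReal (poisPMF ((k : ℝ) * α) m) := by
  induction k with
  | zero =>
      intro m
      cases m with
      | zero =>
          have hset : {ω : Ω | partialSum Y 0 ω = ((0 : ℕ) : ℝ)} = Set.univ := by
            ext ω; simp [partialSum]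
          rw [hset]
          simp [poisPMF]
      | succ m =>
          have hset : {ω : Ω | partialSum Y 0 ω = ((m + 1 : ℕ) : ℝ)} = ∅ := by
            ext ω
            simp only [partialSum, Finset.sum_range_zero, Set.mem_setOf_eq,
              Set.mem_empty_iff_false, iff_false]
            intro h
            exact (Nat.succ_ne_zero m) (by exact_mod_cast h.symm)
          rw [hset]
          have h0 : poisPMF (((0:ℕ) : ℝ) * α) (m + 1) = 0 := by
            norm_num [poisPMF, zero_pow (Nat.succ_ne_zero m)]
          rw [h0]
          simp
  | succ k ih =>
      intro m
      have hSmeas : Measurable (partialSum Y k) :=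
        Finset.measurable_sum _ (fun j _ => hmeas j)
      have hind : IndepFun (partialSum Y k) (Y k) μ := by
        have h := hindep.indepFun_finsetSum_of_notMem hmeas
          (s := Finset.range k) (i := k) (by simp)
        have heq : (∑ j ∈ Finset.range k, Y j) = partialSum Y k := by
          funext ω; simp [partialSum]
        rwa [heq] at h
      set A : ℕ → Set Ω := fun a => partialSum Y k ⁻¹' {(a : ℝ)} with hA
      set B : ℕ → Set Ω := fun b => Y k ⁻¹' {(b : ℝ)} with hB
      have hAmeas : ∀ a, MeasurableSet (A a) := fun a => hSmeas (measurableSet_singleton _)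
      have hBmeas : ∀ b, MeasurableSet (B b) := fun b => hmeas k (measurableSet_singleton _)
      have hAval : ∀ a : ℕ, μ (A a) = ENNReal.ofReal (poisPMF ((k : ℝ) * α) a) := fun a => ih a
      have hBval : ∀ b : ℕ, μ (B b) = ENNReal.ofReal (poisPMF α b) := fun b => hpmf k b
      have hU : μ (⋃ a : ℕ, A a) = 1 :=
        full_measure_of_pmf μ (partialSum Y k) (poisPMF ((k : ℝ) * α)) (poisPMF_hasSum _)
          (poisPMF_nonneg (by positivity)) hSmeas ih
      have hV : μ (⋃ b : ℕ, B b) = 1 :=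
        full_measure_of_pmf μ (Y k) (poisPMF α) (poisPMF_hasSum α)
          (poisPMF_nonneg hα) (hmeas k) (hpmf k)
      have hUc : μ (⋃ a : ℕ, A a)ᶜ = 0 := by
        rw [measure_compl (MeasurableSet.iUnion hAmeas) (measure_ne_top μ _), hU]
        simp
      have hVc : μ (⋃ b : ℕ, B b)ᶜ = 0 := by
        rw [measure_compl (MeasurableSet.iUnion hBmeas) (measure_ne_top μ _), hV]
        simp
      have hW : μ (((⋃ a : ℕ, A a) ∩ (⋃ b : ℕ, B b))ᶜ) = 0 := by
        rw [Set.compl_inter]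
        refine le_antisymm ?_ zero_le
        calc μ ((⋃ a : ℕ, A a)ᶜ ∪ (⋃ b : ℕ, B b)ᶜ)
            ≤ μ (⋃ a : ℕ, A a)ᶜ + μ (⋃ b : ℕ, B b)ᶜ := measure_union_le _ _
          _ = 0 := by rw [hUc, hVc, add_zero]
      have hsucc : ∀ ω, partialSum Y (k + 1) ω = partialSum Y k ω + Y k ω := by
        intro ω; simp [partialSum, Finset.sum_range_succ]
      have hset : {ω | partialSum Y (k + 1) ω = (m : ℝ)} ∩ ((⋃ a : ℕ, A a) ∩ (⋃ b : ℕ, B b))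
          = ⋃ a ∈ Finset.range (m + 1), (A a ∩ B (m - a)) := by
        ext ω
        simp only [Set.mem_inter_iff, Set.mem_setOf_eq, Set.mem_iUnion, Set.mem_preimage,
          Set.mem_singleton_iff, Finset.mem_range, hA, hB, exists_prop]
        constructor
        · rintro ⟨hsum, ⟨a, ha⟩, ⟨b, hb⟩⟩
          have hsum' : partialSum Y k ω + Y k ω = (m : ℝ) := by rw [← hsucc ω]; exact hsum
          have hcast : ((a + b : ℕ) : ℝ) = ((m : ℕ) : ℝ) := by
            push_cast
            rw [← ha, ← hb]
            exact hsum'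
          have hab : a + b = m := Nat.cast_injective hcast
          refine ⟨a, by omega, ha, ?_⟩
          rw [show m - a = b by omega]
          exact hb
        · rintro ⟨a, ha1, ha2, hb2⟩
          refine ⟨?_, ⟨a, ha2⟩, ⟨m - a, hb2⟩⟩
          rw [hsucc ω, ha2, hb2, ← Nat.cast_add]
          congr 1
          omega
      have hdisj : (↑(Finset.range (m + 1)) : Set ℕ).PairwiseDisjoint
          (fun a => A a ∩ B (m - a)) := by
        intro a _ b _ hab
        refine Set.disjoint_left.mpr fun ω hωa hωb => ?_
        have h1 : partialSum Y k ω = (a : ℝ) := hωa.1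
        have h2 : partialSum Y k ω = (b : ℝ) := hωb.1
        exact hab (Nat.cast_injective (h1.symm.trans h2 : (a : ℝ) = (b : ℝ)))
      calc μ {ω | partialSum Y (k + 1) ω = (m : ℝ)}
          = μ ({ω | partialSum Y (k + 1) ω = (m : ℝ)} ∩ ((⋃ a : ℕ, A a) ∩ (⋃ b : ℕ, B b))) :=
            (measure_inter_conull hW).symm
        _ = ∑ a ∈ Finset.range (m + 1), μ (A a ∩ B (m - a)) := by
            rw [hset, measure_biUnion_finset hdisj (fun a _ => (hAmeas a).inter (hBmeas _))]
        _ = ∑ a ∈ Finset.range (m + 1),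
              ENNReal.ofReal (poisPMF ((k : ℝ) * α) a) * ENNReal.ofReal (poisPMF α (m - a)) := by
            refine Finset.sum_congr rfl fun a _ => ?_
            have := hind.measure_inter_preimage_eq_mul {(a : ℝ)} {((m - a : ℕ) : ℝ)}
              (measurableSet_singleton _) (measurableSet_singleton _)
            rw [hA, hB]
            rw [this, hAval a, hBval (m - a)]
        _ = ENNReal.ofReal (∑ a ∈ Finset.range (m + 1),
              poisPMF ((k : ℝ) * α) a * poisPMF α (m - a)) := by
            rw [ENNReal.ofReal_sum_of_nonneg
              (fun a _ => mul_nonneg (poisPMF_nonneg (by positivity) a)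
                (poisPMF_nonneg hα (m - a)))]
            exact Finset.sum_congr rfl fun a _ =>
              (ENNReal.ofReal_mul (poisPMF_nonneg (by positivity) a)).symm
        _ = ENNReal.ofReal (poisPMF (((k : ℕ) + 1 : ℕ) * α) m) := by
            rw [poisPMF_conv]
            congr 2
            push_cast
            ring

lemma degFF_measurable (lam : ℝ) (n : ℕ) : Measurable (degFallingFactorial lam n) := by
  unfold degFallingFactorial
  exact Finset.measurable_prod _ (fun j _ => (measurable_id.sub_const _))

lemma poisson_expectation {β lam : ℝ} (hβ : 0 ≤ β) (n : ℕ)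
    {Ω : Type*} [MeasurableSpace Ω] (μ : Measure Ω) [IsProbabilityMeasure μ]
    (X : Ω → ℝ) (hX : Measurable X)
    (hlaw : μ.map X = Measure.sum (fun m : ℕ => ENNReal.ofReal (poisPMF β m) • Measure.dirac (m : ℝ))) :
    ∫ ω, degFallingFactorial lam n (X ω) ∂μ
      = ∑ t ∈ range (n + 1), (t.factorial : ℝ) * degStirling2 lam n t * (β ^ t / t.factorial) := by
  set c : ℕ → ℝ := fun t => (t.factorial : ℝ) * degStirling2 lam n t with hc
  have hsum : Summable (fun m : ℕ => poisPMF β m * |degFallingFactorial lam n m|) := by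
    have hg : Summable (fun m : ℕ =>
        ∑ t ∈ range (n + 1), |c t| * (poisPMF β m * (m.choose t : ℝ))) := by
      apply summable_sum
      intro t _
      exact (poisPMF_choose_hasSum t).summable.mul_left _
    refine Summable.of_nonneg_of_le
      (fun m => mul_nonneg (poisPMF_nonneg hβ m) (abs_nonneg _)) (fun m => ?_) hg
    have habs : |degFallingFactorial lam n m| ≤ ∑ t ∈ range (n + 1), |c t| * (m.choose t : ℝ) := by
      rw [degFF_expand lam n m]
      refine (Finset.abs_sum_le_sum_abs _ _).trans ?_
      refine Finset.sum_le_sum fun t _ => ?_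
      rw [abs_mul, abs_of_nonneg (by positivity : (0:ℝ) ≤ (m.choose t : ℝ))]
    calc poisPMF β m * |degFallingFactorial lam n m|
        ≤ poisPMF β m * ∑ t ∈ range (n + 1), |c t| * (m.choose t : ℝ) :=
          mul_le_mul_of_nonneg_left habs (poisPMF_nonneg hβ m)
      _ = ∑ t ∈ range (n + 1), |c t| * (poisPMF β m * (m.choose t : ℝ)) := by
          rw [Finset.mul_sum]; exact Finset.sum_congr rfl fun t _ => by ring
  rw [integral_of_pmf μ X (poisPMF β) (poisPMF_nonneg hβ) hX (degFF_measurable lam n) hlaw hsum]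
  have hterm : ∀ m : ℕ, poisPMF β m * degFallingFactorial lam n m
      = ∑ t ∈ range (n + 1), c t * (poisPMF β m * (m.choose t : ℝ)) := by
    intro m
    rw [degFF_expand lam n m, Finset.mul_sum]
    exact Finset.sum_congr rfl fun t _ => by ring
  rw [tsum_congr hterm]
  have hhs : HasSum (fun m : ℕ => ∑ t ∈ range (n + 1), c t * (poisPMF β m * (m.choose t : ℝ)))
      (∑ t ∈ range (n + 1), c t * (poisPMF β t * Real.exp β)) :=
    hasSum_sum fun t _ => (poisPMF_choose_hasSum t).mul_left (c t)
  rw [hhs.tsum_eq]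
  refine Finset.sum_congr rfl fun t _ => ?_
  have h1 : poisPMF β t * Real.exp β = β ^ t / t.factorial := by
    rw [← (poisPMF_choose_hasSum (β := β) t).tsum_eq]
    exact poisPMF_choose_tsum t
  rw [h1]


theorem probDegFubini_of_poisson
    {Ω : Type*} [MeasurableSpace Ω] (μ : Measure Ω) [IsProbabilityMeasure μ]
    (Y : ℕ → Ω → ℝ) (lam : ℝ)
    (hmeas : ∀ j, Measurable (Y j))
    (hindep : iIndepFun Y μ)
    (hident : ∀ j, IdentDistrib (Y j) (Y 0) μ μ)
    (α : ℝ) (hα : 0 < α)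
    (hpois : ∀ m : ℕ,
      μ {ω | Y 0 ω = m} = ENNReal.ofReal (Real.exp (-α) * α ^ m / m.factorial))
    (n : ℕ) (x : ℝ) :
    probDegFubini μ Y lam n x =
      ∑ i ∈ Finset.range (n + 1), fubiniPoly i x * degStirling2 lam n i * α ^ i := by
  have hα' : 0 ≤ α := hα.le
  have hpmf : ∀ j m : ℕ, μ {ω | Y j ω = m} = ENNReal.ofReal (poisPMF α m) := by
    intro j m
    have h1 : {ω | Y j ω = (m : ℝ)} = Y j ⁻¹' {(m : ℝ)} := rfl
    rw [h1, ← Measure.map_apply (hmeas j) (measurableSet_singleton _), (hident j).map_eq,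
      Measure.map_apply (hmeas 0) (measurableSet_singleton _)]
    exact hpois m
  have hSmeas : ∀ j, Measurable (partialSum Y j) :=
    fun j => Finset.measurable_sum _ (fun i _ => hmeas i)
  have hlawS : ∀ j : ℕ, μ.map (partialSum Y j)
      = Measure.sum (fun m : ℕ => ENNReal.ofReal (poisPMF ((j : ℝ) * α) m) • Measure.dirac (m : ℝ)) := by
    intro j
    exact law_of_pmf μ _ _ (poisPMF_hasSum _) (poisPMF_nonneg (by positivity)) (hSmeas j)
      (partialSum_law μ Y hmeas hindep α hα' hpmf j)
  have hE : ∀ j : ℕ, ∫ ω, degFallingFactorial lam n (partialSum Y j ω) ∂μ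
      = ∑ t ∈ range (n + 1), degStirling2 lam n t * α ^ t * (j : ℝ) ^ t := by
    intro j
    rw [poisson_expectation (by positivity) n μ _ (hSmeas j) (hlawS j)]
    refine Finset.sum_congr rfl fun t _ => ?_
    have ht : (t.factorial : ℝ) ≠ 0 := Nat.cast_ne_zero.mpr t.factorial_ne_zero
    rw [mul_pow]
    field_simp
  have hPDS : ∀ k : ℕ, probDegStirling2 μ Y lam n k
      = ∑ t ∈ range (n + 1), (degStirling2 lam n t * α ^ t) * stirling2 t k := by
    intro k
    unfold probDegStirling2
    have h1 : ∀ j ∈ range (k + 1),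
        (-1 : ℝ) ^ (k - j) * k.choose j * ∫ ω, degFallingFactorial lam n (partialSum Y j ω) ∂μ
        = ∑ t ∈ range (n + 1),
            (degStirling2 lam n t * α ^ t) * ((-1 : ℝ) ^ (k - j) * k.choose j * (j : ℝ) ^ t) := by
      intro j _
      rw [hE j, Finset.mul_sum]
      exact Finset.sum_congr rfl fun t _ => by ring
    rw [Finset.sum_congr rfl h1, Finset.sum_comm, Finset.mul_sum]
    refine Finset.sum_congr rfl fun t _ => ?_
    rw [← Finset.mul_sum]
    unfold stirling2
    ring
  unfold probDegFubini
  have h2 : ∀ k ∈ range (n + 1), probDegStirling2 μ Y lam n k * k.factorial * x ^ k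
      = ∑ t ∈ range (n + 1),
          (degStirling2 lam n t * α ^ t) * (stirling2 t k * k.factorial * x ^ k) := by
    intro k _
    rw [hPDS k, Finset.sum_mul, Finset.sum_mul]
    exact Finset.sum_congr rfl fun t _ => by ring
  rw [Finset.sum_congr rfl h2, Finset.sum_comm]
  refine Finset.sum_congr rfl fun t ht => ?_
  rw [← Finset.mul_sum]
  have h3 : ∑ k ∈ range (n + 1), stirling2 t k * k.factorial * x ^ k = fubiniPoly t x := by
    unfold fubiniPoly
    symm
    apply Finset.sum_subset
    · intro k hk
      simp only [mem_range] at hk ht ⊢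
      omega
    · intro k _ hk
      simp only [mem_range, Nat.lt_succ_iff, not_lt] at hk
      rw [stirling2_vanish (by omega : t < k)]
      ring
  rw [h3]
  ring
end

section
/- Let α > 0 and let (Y_j)_{j≥1} be mutually independent Poisson random variables with parameter α, S_0 = 0, S_k = Y_1 + ⋯ + Y_k. Then for all n, k ≥ 0, E[(S_k)_{n,λ}] = φ_{n,λ}(kα), where φ_{n,λ} is the degenerate Bell polynomial. -/
open MeasureTheory ProbabilityTheory Finset

/-- The degenerate Bell polynomials. -/
noncomputable def degBell (lam : ℝ) (n : ℕ) (x : ℝ) : ℝ :=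
  ∑ i ∈ Finset.range (n + 1), degStirling2 lam n i * x ^ i


section DegBellProofAux
open scoped ENNReal NNReal

noncomputable def pReal (b : ℝ) (m : ℕ) : ℝ := Real.exp (-b) * b ^ m / m.factorial

lemma pReal_nonneg {b : ℝ} (hb : 0 ≤ b) (m : ℕ) : 0 ≤ pReal b m := by
  unfold pReal; positivity

lemma hasSum_pReal_descFactorial (b : ℝ) (i : ℕ) :
    HasSum (fun m : ℕ => pReal b m * (m.descFactorial i : ℝ)) (b ^ i) := by
  have h1 : HasSum (fun t : ℕ => b ^ t / t.factorial) (Real.exp b) := by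
    rw [Real.exp_eq_exp_ℝ]; exact NormedSpace.expSeries_div_hasSum_exp b
  have h2 : HasSum (fun t : ℕ => (Real.exp (-b) * b ^ i) * (b ^ t / t.factorial)) (b ^ i) := by
    have := h1.mul_left (Real.exp (-b) * b ^ i)
    rw [show Real.exp (-b) * b ^ i * Real.exp b = b ^ i by
      rw [mul_comm (Real.exp (-b)) (b ^ i), mul_assoc, ← Real.exp_add, neg_add_cancel,
        Real.exp_zero, mul_one]] at this
    exact this
  have hinj : Function.Injective (fun t : ℕ => t + i) := fun a c h => by simpa using h
  have hzero : ∀ m : ℕ, m ∉ Set.range (fun t : ℕ => t + i) →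
      pReal b m * (m.descFactorial i : ℝ) = 0 := by
    intro m hm
    have hlt : m < i := by
      by_contra h
      exact hm ⟨m - i, by simp; omega⟩
    rw [Nat.descFactorial_eq_zero_iff_lt.mpr hlt]
    simp
  rw [← Function.Injective.hasSum_iff hinj hzero]
  convert h2 using 1
  funext t
  have hle : i ≤ t + i := Nat.le_add_left i t
  have hfac : ((t + i).factorial : ℝ) = (t.factorial : ℝ) * ((t + i).descFactorial i : ℝ) := by
    exact_mod_cast congrArg (Nat.cast (R := ℝ))
      (by rw [← Nat.factorial_mul_descFactorial hle, Nat.add_sub_cancel] :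
        (t + i).factorial = t.factorial * (t + i).descFactorial i)
  have hd : ((t + i).descFactorial i : ℝ) ≠ 0 := by
    have : (t + i).descFactorial i ≠ 0 := fun h =>
      absurd (Nat.descFactorial_eq_zero_iff_lt.mp h) (by omega)
    exact_mod_cast this
  show pReal b (t + i) * _ = _
  unfold pReal
  rw [hfac, pow_add]
  field_simp

lemma hasSum_pReal_one (b : ℝ) : HasSum (pReal b) 1 := by
  simpa using hasSum_pReal_descFactorial b 0

lemma pReal_conv (x y : ℝ) (m : ℕ) :
    ∑ a ∈ Finset.range (m + 1), pReal x a * pReal y (m - a) = pReal (x + y) m := by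
  have hterm : ∀ a ∈ Finset.range (m + 1), pReal x a * pReal y (m - a) =
      Real.exp (-(x + y)) / m.factorial * (x ^ a * y ^ (m - a) * (m.choose a : ℝ)) := by
    intro a ha
    simp only [Finset.mem_range] at ha
    have ham : a ≤ m := by omega
    have hfac : ((m.choose a : ℕ) : ℝ) * (a.factorial : ℝ) * ((m - a).factorial : ℝ)
        = (m.factorial : ℝ) := by
      exact_mod_cast congrArg (Nat.cast (R := ℝ)) (Nat.choose_mul_factorial_mul_factorial ham)
    have hexp : Real.exp (-x) * Real.exp (-y) = Real.exp (-(x + y)) := by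
      rw [← Real.exp_add]; ring_nf
    have hA : (a.factorial : ℝ) ≠ 0 := by exact_mod_cast a.factorial_ne_zero
    have hB : ((m - a).factorial : ℝ) ≠ 0 := by exact_mod_cast (m - a).factorial_ne_zero
    have hM : (m.factorial : ℝ) ≠ 0 := by exact_mod_cast m.factorial_ne_zero
    unfold pReal
    field_simp
    rw [← hexp]
    linear_combination (-(Real.exp (-x) * Real.exp (-y) * x ^ a * y ^ (m - a))) * hfac
  rw [Finset.sum_congr rfl hterm, ← Finset.mul_sum, ← add_pow]
  unfold pReal
  ring

noncomputable def Aa (lam : ℝ) (n i : ℕ) : ℝ :=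
  ∑ j ∈ Finset.range (i + 1), (-1 : ℝ) ^ (i - j) * i.choose j * degFallingFactorial lam n j

lemma degStirling2_eq_Aa (lam : ℝ) (n i : ℕ) :
    degStirling2 lam n i = (1 / i.factorial : ℝ) * Aa lam n i := rfl

lemma degFF_succ (lam : ℝ) (n : ℕ) (x : ℝ) :
    degFallingFactorial lam (n + 1) x = degFallingFactorial lam n x * (x - n * lam) :=
  Finset.prod_range_succ _ n

lemma Aa_rec (lam : ℝ) (n i : ℕ) :
    Aa lam (n + 1) (i + 1) =
      ((i : ℝ) + 1) * Aa lam n i + (((i : ℝ) + 1) - n * lam) * Aa lam n (i + 1) := by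
  unfold Aa
  have hsplit : ∀ j ∈ Finset.range (i + 2),
      (-1 : ℝ) ^ (i + 1 - j) * (i + 1).choose j * degFallingFactorial lam (n + 1) j =
      (-1 : ℝ) ^ (i + 1 - j) * (i + 1).choose j * ((j : ℝ) - ((i : ℝ) + 1)) *
        degFallingFactorial lam n j +
      (((i : ℝ) + 1) - n * lam) *
        ((-1 : ℝ) ^ (i + 1 - j) * (i + 1).choose j * degFallingFactorial lam n j) := by
    intro j _
    rw [degFF_succ]
    ring
  rw [Finset.sum_congr rfl hsplit, Finset.sum_add_distrib, ← Finset.mul_sum]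
  congr 1
  -- first sum equals (i+1) * Aa lam n i
  rw [Finset.sum_range_succ]
  have hlast : (-1 : ℝ) ^ (i + 1 - (i + 1)) * (((i + 1).choose (i + 1) : ℕ) : ℝ) *
      (((i + 1 : ℕ) : ℝ) - ((i : ℝ) + 1)) * degFallingFactorial lam n ((i + 1 : ℕ) : ℝ) = 0 := by
    push_cast
    ring
  rw [hlast, add_zero, Finset.mul_sum]
  apply Finset.sum_congr rfl
  intro j hj
  have hj' : j ≤ i := by simpa [Nat.lt_succ_iff] using hj
  have hchoose : ((i + 1).choose j : ℝ) * (((i : ℝ) + 1) - (j : ℝ)) =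
      ((i : ℝ) + 1) * (i.choose j : ℝ) := by
    have h := Nat.choose_mul_succ_eq i j
    have h2 : ((i.choose j * (i + 1) : ℕ) : ℝ) = (((i + 1).choose j * (i + 1 - j) : ℕ) : ℝ) := by
      exact_mod_cast congrArg (Nat.cast (R := ℝ)) h
    push_cast [Nat.cast_sub (by omega : j ≤ i + 1)] at h2
    linarith [h2]
  have hsign : (-1 : ℝ) ^ (i + 1 - j) = -(-1 : ℝ) ^ (i - j) := by
    rw [show i + 1 - j = (i - j) + 1 by omega, pow_succ]
    ring
  rw [hsign]
  have : ((j : ℝ) - ((i : ℝ) + 1)) = -(((i : ℝ) + 1) - (j : ℝ)) := by ring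
  rw [this]
  calc -(-1 : ℝ) ^ (i - j) * ((i + 1).choose j : ℝ) * -(((i : ℝ) + 1) - (j : ℝ)) *
        degFallingFactorial lam n j
      = (-1 : ℝ) ^ (i - j) * (((i + 1).choose j : ℝ) * (((i : ℝ) + 1) - (j : ℝ))) *
        degFallingFactorial lam n j := by ring
    _ = ((i : ℝ) + 1) * ((-1 : ℝ) ^ (i - j) * (i.choose j : ℝ) * degFallingFactorial lam n j) := by
        rw [hchoose]; ring

lemma Aa_zero (lam : ℝ) : ∀ n i : ℕ, n < i → Aa lam n i = 0 := by
  intro n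
  induction n with
  | zero =>
    intro i hi
    unfold Aa
    have h1 : ∀ j ∈ Finset.range (i + 1),
        (-1 : ℝ) ^ (i - j) * (i.choose j : ℝ) * degFallingFactorial lam 0 j =
        (-1 : ℝ) ^ i * ((-1 : ℝ) ^ j * (i.choose j : ℝ)) := by
      intro j hj
      have hj' : j ≤ i := by simpa [Nat.lt_succ_iff] using hj
      have : (-1 : ℝ) ^ (i - j) = (-1 : ℝ) ^ (i + j) := by
        rw [show i + j = (i - j) + 2 * j by omega, pow_add, pow_mul]
        simp
      rw [this, pow_add]
      simp [degFallingFactorial]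
      ring
    rw [Finset.sum_congr rfl h1, ← Finset.mul_sum]
    have h0 : (∑ j ∈ Finset.range (i + 1), (-1 : ℝ) ^ j * (i.choose j : ℝ)) = 0 := by
      have := Int.alternating_sum_range_choose_of_ne (by omega : i ≠ 0)
      exact_mod_cast congrArg (Int.cast (R := ℝ)) this
    rw [h0, mul_zero]
  | succ n ih =>
    intro i hi
    obtain ⟨i', rfl⟩ : ∃ i', i = i' + 1 := ⟨i - 1, by omega⟩
    rw [Aa_rec, ih i' (by omega), ih (i' + 1) (by omega)]
    ring

lemma alt_choose_choose (m j : ℕ) (hj : j ≤ m) :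
    ∑ i ∈ Finset.range (m + 1), (-1 : ℝ) ^ (i - j) * (m.choose i : ℝ) * (i.choose j : ℝ) =
      if j = m then 1 else 0 := by
  have hsub : Finset.Ico j (m + 1) ⊆ Finset.range (m + 1) := by
    intro x hx
    simp only [Finset.mem_Ico] at hx
    simp [hx.2]
  have hdrop : ∑ i ∈ Finset.range (m + 1),
      (-1 : ℝ) ^ (i - j) * (m.choose i : ℝ) * (i.choose j : ℝ) =
      ∑ i ∈ Finset.Ico j (m + 1), (-1 : ℝ) ^ (i - j) * (m.choose i : ℝ) * (i.choose j : ℝ) := by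
    refine (Finset.sum_subset hsub ?_).symm
    intro i _ hi
    simp only [Finset.mem_Ico, Finset.mem_range] at *
    have : i < j := by omega
    rw [Nat.choose_eq_zero_of_lt this]
    simp
  rw [hdrop, Finset.sum_Ico_eq_sum_range]
  have hterm : ∀ t ∈ Finset.range (m + 1 - j),
      (-1 : ℝ) ^ (j + t - j) * (m.choose (j + t) : ℝ) * ((j + t).choose j : ℝ) =
      (m.choose j : ℝ) * ((-1 : ℝ) ^ t * ((m - j).choose t : ℝ)) := by
    intro t ht
    simp only [Finset.mem_range] at ht
    have h1 : j + t ≤ m := by omega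
    have h2 : j ≤ j + t := by omega
    have h := Nat.choose_mul (n := m) h2
    rw [Nat.add_sub_cancel_left] at h
    have h' : (m.choose (j + t) : ℝ) * ((j + t).choose j : ℝ) =
        (m.choose j : ℝ) * ((m - j).choose t : ℝ) := by exact_mod_cast congrArg (Nat.cast (R := ℝ)) h
    rw [Nat.add_sub_cancel_left, mul_assoc, h']
    ring
  rw [Finset.sum_congr rfl hterm, ← Finset.mul_sum]
  have hrange : m + 1 - j = (m - j) + 1 := by omega
  rw [hrange]
  have halt : (∑ t ∈ Finset.range ((m - j) + 1), (-1 : ℝ) ^ t * ((m - j).choose t : ℝ)) =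
      if m - j = 0 then 1 else 0 := by
    have := Int.alternating_sum_range_choose (n := m - j)
    exact_mod_cast congrArg (Int.cast (R := ℝ)) this
  rw [halt]
  by_cases hjm : j = m
  · subst hjm
    simp
  · have : m - j ≠ 0 := by omega
    simp [this, hjm]

lemma binom_inversion (f : ℕ → ℝ) (m : ℕ) :
    ∑ i ∈ Finset.range (m + 1), (m.choose i : ℝ) *
      (∑ j ∈ Finset.range (i + 1), (-1 : ℝ) ^ (i - j) * (i.choose j : ℝ) * f j) = f m := by
  have hinner : ∀ i ∈ Finset.range (m + 1),
      (m.choose i : ℝ) * (∑ j ∈ Finset.range (i + 1), (-1 : ℝ) ^ (i - j) * (i.choose j : ℝ) * f j)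
      = ∑ j ∈ Finset.range (m + 1),
          (-1 : ℝ) ^ (i - j) * (m.choose i : ℝ) * (i.choose j : ℝ) * f j := by
    intro i hi
    simp only [Finset.mem_range] at hi
    rw [Finset.mul_sum]
    rw [Finset.sum_subset (Finset.range_subset_range.mpr (by omega : i + 1 ≤ m + 1))]
    · apply Finset.sum_congr rfl
      intro j _
      ring
    · intro j _ hj
      simp only [Finset.mem_range] at hj
      rw [Nat.choose_eq_zero_of_lt (by omega : i < j)]
      simp
  rw [Finset.sum_congr rfl hinner, Finset.sum_comm]
  have houter : ∀ j ∈ Finset.range (m + 1),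
      (∑ i ∈ Finset.range (m + 1), (-1 : ℝ) ^ (i - j) * (m.choose i : ℝ) * (i.choose j : ℝ) * f j)
      = (if j = m then 1 else 0) * f j := by
    intro j hj
    simp only [Finset.mem_range] at hj
    rw [← Finset.sum_mul, alt_choose_choose m j (by omega)]
  rw [Finset.sum_congr rfl houter]
  rw [Finset.sum_eq_single m (fun j _ hj => by simp [hj]) (fun h => absurd (Finset.self_mem_range_succ m) h)]
  simp

lemma degFF_nat_eq (lam : ℝ) (n m : ℕ) :
    degFallingFactorial lam n (m : ℝ) =
      ∑ i ∈ Finset.range (n + 1), degStirling2 lam n i * (m.descFactorial i : ℝ) := by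
  have hN : ∀ N : ℕ, n ≤ N → m ≤ N →
      (∑ i ∈ Finset.range (n + 1), degStirling2 lam n i * (m.descFactorial i : ℝ)) =
      ∑ i ∈ Finset.range (N + 1), (m.choose i : ℝ) * Aa lam n i := by
    intro N hn hm
    have hstep : ∀ i : ℕ, degStirling2 lam n i * (m.descFactorial i : ℝ) =
        (m.choose i : ℝ) * Aa lam n i := by
      intro i
      rw [degStirling2_eq_Aa]
      have : (m.descFactorial i : ℝ) = (i.factorial : ℝ) * (m.choose i : ℝ) := by
        exact_mod_cast congrArg (Nat.cast (R := ℝ)) (Nat.descFactorial_eq_factorial_mul_choose m i)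
      rw [this]
      have hfac : (i.factorial : ℝ) ≠ 0 := by exact_mod_cast i.factorial_ne_zero
      field_simp
    rw [Finset.sum_congr rfl (fun i _ => hstep i)]
    apply Finset.sum_subset (Finset.range_subset_range.mpr (by omega : n + 1 ≤ N + 1))
    intro i _ hi
    simp only [Finset.mem_range] at hi
    rw [Aa_zero lam n i (by omega)]
    simp
  have h1 := hN (max n m) (le_max_left n m) (le_max_right n m)
  have h2 : (∑ i ∈ Finset.range (max n m + 1), (m.choose i : ℝ) * Aa lam n i) =
      ∑ i ∈ Finset.range (m + 1), (m.choose i : ℝ) * Aa lam n i := by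
    refine (Finset.sum_subset (Finset.range_subset_range.mpr (by omega : m + 1 ≤ max n m + 1)) ?_).symm
    intro i _ hi
    simp only [Finset.mem_range] at hi
    rw [Nat.choose_eq_zero_of_lt (by omega : m < i)]
    simp
  rw [h1, h2]
  exact (binom_inversion (fun j => degFallingFactorial lam n (j : ℝ)) m).symm

section
variable {Ω : Type*} [MeasurableSpace Ω] (μ : Measure Ω) [IsProbabilityMeasure μ]

omit [MeasurableSpace Ω] in
lemma natFiber_pairwise_disjoint (Z : Ω → ℝ) :
    Pairwise (Function.onFun Disjoint (fun m : ℕ => Z ⁻¹' {(m : ℝ)})) := by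
  intro a b hab
  refine Set.disjoint_left.mpr fun ω h1 h2 => hab ?_
  have : ((a : ℕ) : ℝ) = ((b : ℕ) : ℝ) := by
    simp only [Set.mem_preimage, Set.mem_singleton_iff] at h1 h2
    rw [← h1, ← h2]
  exact_mod_cast this

lemma measure_iUnion_fiber (Z : Ω → ℝ) (hZ : Measurable Z) (p : ℕ → ℝ)
    (hp : ∀ m, 0 ≤ p m) (hsum : HasSum p 1)
    (hpmf : ∀ m : ℕ, μ (Z ⁻¹' {(m : ℝ)}) = ENNReal.ofReal (p m)) :
    μ (⋃ m : ℕ, Z ⁻¹' {(m : ℝ)})ᶜ = 0 := by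
  have hU : μ (⋃ m : ℕ, Z ⁻¹' {(m : ℝ)}) = 1 := by
    rw [measure_iUnion (natFiber_pairwise_disjoint Z)
      (fun m => hZ (measurableSet_singleton _))]
    simp_rw [hpmf]
    rw [← ENNReal.ofReal_tsum_of_nonneg hp hsum.summable, hsum.tsum_eq]
    simp
  rw [measure_compl (MeasurableSet.iUnion fun m => hZ (measurableSet_singleton _))
    (measure_ne_top μ _), hU, measure_univ, tsub_self]

lemma integral_comp_eq_tsum (Z : Ω → ℝ) (hZ : Measurable Z) (p : ℕ → ℝ)
    (hp : ∀ m, 0 ≤ p m) (hsum : HasSum p 1)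
    (hpmf : ∀ m : ℕ, μ (Z ⁻¹' {(m : ℝ)}) = ENNReal.ofReal (p m))
    (g : ℝ → ℝ) (hg : Measurable g)
    (hsummable : Summable fun m : ℕ => p m * |g m|) :
    ∫ ω, g (Z ω) ∂μ = ∑' m : ℕ, p m * g m := by
  set s : ℕ → Set Ω := fun m => Z ⁻¹' {(m : ℝ)} with hs
  have hms : ∀ m, MeasurableSet (s m) := fun m => hZ (measurableSet_singleton _)
  have hd := natFiber_pairwise_disjoint Z
  have hU0 := measure_iUnion_fiber μ Z hZ p hp hsum hpmf
  have hres : μ.restrict (⋃ m, s m) = μ :=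
    Measure.restrict_eq_self_of_ae_mem (ae_iff.mpr hU0)
  have hsetl : ∀ (m : ℕ) (c : ℝ → ℝ≥0∞),
      ∫⁻ ω in s m, c (Z ω) ∂μ = c (m : ℝ) * μ (s m) := by
    intro m c
    rw [setLIntegral_congr_fun (hms m)
      (fun ω (hω : ω ∈ s m) => by
        simp only [hs, Set.mem_preimage, Set.mem_singleton_iff] at hω
        rw [hω]),
      setLIntegral_const]
  have hint : Integrable (fun ω => g (Z ω)) μ := by
    refine ⟨(hg.comp hZ).aestronglyMeasurable, ?_⟩
    rw [hasFiniteIntegral_def]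
    calc ∫⁻ ω, ‖g (Z ω)‖ₑ ∂μ
        = ∫⁻ ω in ⋃ m, s m, ‖g (Z ω)‖ₑ ∂μ := by rw [hres]
      _ = ∑' m : ℕ, ∫⁻ ω in s m, ‖g (Z ω)‖ₑ ∂μ := lintegral_iUnion hms hd _
      _ = ∑' m : ℕ, ENNReal.ofReal (p m * |g (m : ℝ)|) := by
          refine tsum_congr fun m => ?_
          rw [hsetl m (fun x => ‖g x‖ₑ), hpmf m, Real.enorm_eq_ofReal_abs,
            ← ENNReal.ofReal_mul (abs_nonneg _), mul_comm]
      _ = ENNReal.ofReal (∑' m : ℕ, p m * |g (m : ℝ)|) :=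
          (ENNReal.ofReal_tsum_of_nonneg (fun m => mul_nonneg (hp m) (abs_nonneg _))
            hsummable).symm
      _ < ⊤ := ENNReal.ofReal_lt_top
  calc ∫ ω, g (Z ω) ∂μ
      = ∫ ω in ⋃ m, s m, g (Z ω) ∂μ := by rw [hres]
    _ = ∑' m : ℕ, ∫ ω in s m, g (Z ω) ∂μ := by
        refine integral_iUnion hms hd ?_
        rw [← hres] at hint
        exact hint
    _ = ∑' m : ℕ, p m * g (m : ℝ) := by
        refine tsum_congr fun m => ?_
        rw [setIntegral_congr_fun (hms m)
          (fun ω (hω : ω ∈ s m) => by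
            simp only [hs, Set.mem_preimage, Set.mem_singleton_iff] at hω
            rw [hω]),
          setIntegral_const, measureReal_def, hpmf m, ENNReal.toReal_ofReal (hp m), smul_eq_mul]

end

end DegBellProofAux

theorem expectation_partialSum_poisson_eq_degBell
    {Ω : Type*} [MeasurableSpace Ω] (μ : Measure Ω) [IsProbabilityMeasure μ]
    (Y : ℕ → Ω → ℝ) (lam : ℝ)
    (hmeas : ∀ j, Measurable (Y j))
    (hindep : iIndepFun Y μ)
    (α : ℝ) (hα : 0 < α)
    (hpois : ∀ j, ∀ m : ℕ,
      μ {ω | Y j ω = m} = ENNReal.ofReal (Real.exp (-α) * α ^ m / m.factorial))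
    (n k : ℕ) :
    ∫ ω, degFallingFactorial lam n (partialSum Y k ω) ∂μ = degBell lam n (k * α) := by
  classical
  have hSmeas : ∀ j : ℕ, Measurable (partialSum Y j) := by
    intro j
    unfold partialSum
    exact Finset.measurable_sum _ (fun i _ => hmeas i)
  have hα' : (0:ℝ) ≤ α := hα.le
  have hpois' : ∀ j (m : ℕ), μ (Y j ⁻¹' {(m : ℝ)}) = ENNReal.ofReal (pReal α m) := by
    intro j m
    have hset : Y j ⁻¹' {(m : ℝ)} = {ω | Y j ω = (m : ℝ)} := by
      ext ω; simp [Set.mem_preimage]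
    rw [hset, hpois j m]
    rfl
  -- the distribution of the partial sums
  have hdist : ∀ (j : ℕ) (m : ℕ),
      μ (partialSum Y j ⁻¹' {(m : ℝ)}) = ENNReal.ofReal (pReal ((j : ℝ) * α) m) := by
    intro j
    induction j with
    | zero =>
      intro m
      have h0 : partialSum Y 0 = fun _ => (0 : ℝ) := by
        funext ω; simp [partialSum]
      rw [h0]
      by_cases hm : m = 0
      · subst hm
        rw [Set.preimage_const_of_mem (by simp)]
        norm_num [pReal]
      · have hne : (0:ℝ) ∉ ({((m:ℕ):ℝ)} : Set ℝ) := by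
          simp only [Set.mem_singleton_iff]
          exact fun h => hm (by exact_mod_cast h.symm)
        rw [Set.preimage_const_of_notMem hne]
        simp [pReal, zero_pow hm]
    | succ j ih =>
      intro m
      have hsplit : ∀ ω, partialSum Y (j + 1) ω = partialSum Y j ω + Y j ω :=
        fun ω => Finset.sum_range_succ _ j
      have hindepSX : IndepFun (partialSum Y j) (Y j) μ := by
        have h := hindep.indepFun_sum_range_succ hmeas j
        have heq : (∑ i ∈ Finset.range j, Y i) = partialSum Y j := by
          funext ω; simp [partialSum]
        rwa [heq] at h
      have hSae := measure_iUnion_fiber μ (partialSum Y j) (hSmeas j)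
        (pReal ((j : ℝ) * α)) (fun m' => pReal_nonneg (by positivity) m')
        (hasSum_pReal_one _) ih
      have hXae := measure_iUnion_fiber μ (Y j) (hmeas j) (pReal α)
        (fun m' => pReal_nonneg hα' m') (hasSum_pReal_one _) (hpois' j)
      set GS := (⋃ a : ℕ, partialSum Y j ⁻¹' {(a : ℝ)}) with hGS
      set GX := (⋃ b : ℕ, Y j ⁻¹' {(b : ℝ)}) with hGX
      set E : Set Ω := ⋃ a ∈ Finset.range (m + 1),
        (partialSum Y j ⁻¹' {(a : ℝ)} ∩ Y j ⁻¹' {((m - a : ℕ) : ℝ)}) with hE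
      have h_sub2 : E ⊆ partialSum Y (j + 1) ⁻¹' {(m : ℝ)} := by
        intro ω hω
        simp only [hE, Set.mem_iUnion, Set.mem_inter_iff, Set.mem_preimage,
          Set.mem_singleton_iff, Finset.mem_range] at hω
        obtain ⟨a, ha, hS, hX⟩ := hω
        have ham : a ≤ m := by omega
        simp only [Set.mem_preimage, Set.mem_singleton_iff]
        rw [hsplit ω, hS, hX, ← Nat.cast_add, Nat.add_sub_cancel' ham]
      have h_sub1 : partialSum Y (j + 1) ⁻¹' {(m : ℝ)} ⊆ E ∪ GSᶜ ∪ GXᶜ := by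
        intro ω hω
        by_cases hg1 : ω ∈ GS
        · by_cases hg2 : ω ∈ GX
          · left; left
            simp only [hGS, hGX, Set.mem_iUnion, Set.mem_preimage,
              Set.mem_singleton_iff] at hg1 hg2
            obtain ⟨a, hS⟩ := hg1
            obtain ⟨b, hX⟩ := hg2
            simp only [Set.mem_preimage, Set.mem_singleton_iff] at hω
            have hab : a + b = m := by
              have hcast : ((a + b : ℕ) : ℝ) = (m : ℝ) := by
                push_cast
                rw [← hS, ← hX, ← hsplit ω, hω]
              exact_mod_cast hcast
            simp only [hE, Set.mem_iUnion, Set.mem_inter_iff, Set.mem_preimage,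
              Set.mem_singleton_iff, Finset.mem_range]
            refine ⟨a, by omega, hS, ?_⟩
            rw [hX]
            congr 1
            omega
          · right; exact hg2
        · left; right; exact hg1
      have hEdisj : Set.PairwiseDisjoint (↑(Finset.range (m+1)) : Set ℕ)
          (fun a : ℕ => partialSum Y j ⁻¹' {(a : ℝ)} ∩ Y j ⁻¹' {((m - a : ℕ) : ℝ)}) := by
        intro a _ b _ hab
        exact (natFiber_pairwise_disjoint (partialSum Y j) hab).mono
          Set.inter_subset_left Set.inter_subset_left
      have hEμ : μ E = ENNReal.ofReal (pReal (((j + 1 : ℕ) : ℝ) * α) m) := by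
        rw [hE, measure_biUnion_finset hEdisj (fun a _ =>
          ((hSmeas j) (measurableSet_singleton _)).inter
            ((hmeas j) (measurableSet_singleton _)))]
        have hterm : ∀ a ∈ Finset.range (m + 1),
            μ (partialSum Y j ⁻¹' {(a : ℝ)} ∩ Y j ⁻¹' {((m - a : ℕ) : ℝ)}) =
            ENNReal.ofReal (pReal ((j : ℝ) * α) a * pReal α (m - a)) := by
          intro a _
          rw [hindepSX.measure_inter_preimage_eq_mul _ _ (measurableSet_singleton _)
            (measurableSet_singleton _), ih a, hpois' j (m - a),
            ← ENNReal.ofReal_mul (pReal_nonneg (by positivity) a)]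
        rw [Finset.sum_congr rfl hterm,
          ← ENNReal.ofReal_sum_of_nonneg (fun a _ =>
            mul_nonneg (pReal_nonneg (by positivity) a) (pReal_nonneg hα' (m - a))),
          pReal_conv]
        congr 2
        push_cast
        ring
      refine le_antisymm ?_ ?_
      · have h1 := (measure_mono (μ := μ) h_sub1).trans ((measure_union_le _ GXᶜ).trans
          (add_le_add_left (measure_union_le E GSᶜ) (μ GXᶜ)))
        rw [hSae, hXae, add_zero, add_zero, hEμ] at h1
        exact h1
      · have h2 := measure_mono (μ := μ) h_sub2
        rw [hEμ] at h2
        exact h2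
  -- final computation
  have hg : Measurable (degFallingFactorial lam n) := by
    unfold degFallingFactorial
    exact Finset.measurable_prod _ (fun i _ => measurable_id.sub measurable_const)
  have hkα : (0:ℝ) ≤ (k:ℝ) * α := by positivity
  have hsummable : Summable fun m : ℕ =>
      pReal ((k:ℝ) * α) m * |degFallingFactorial lam n (m : ℝ)| := by
    have hs : Summable fun m : ℕ => ∑ i ∈ Finset.range (n+1),
        |degStirling2 lam n i| * (pReal ((k:ℝ)*α) m * (m.descFactorial i : ℝ)) :=
      summable_sum (fun i _ =>
        ((hasSum_pReal_descFactorial ((k:ℝ)*α) i).summable).mul_left _)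
    refine Summable.of_nonneg_of_le (fun m => mul_nonneg (pReal_nonneg hkα m) (abs_nonneg _))
      (fun m => ?_) hs
    rw [degFF_nat_eq]
    calc pReal ((k:ℝ)*α) m *
          |∑ i ∈ Finset.range (n+1), degStirling2 lam n i * (m.descFactorial i : ℝ)|
        ≤ pReal ((k:ℝ)*α) m *
          ∑ i ∈ Finset.range (n+1), |degStirling2 lam n i * (m.descFactorial i : ℝ)| :=
          mul_le_mul_of_nonneg_left (Finset.abs_sum_le_sum_abs _ _) (pReal_nonneg hkα m)
      _ = ∑ i ∈ Finset.range (n+1),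
            |degStirling2 lam n i| * (pReal ((k:ℝ)*α) m * (m.descFactorial i : ℝ)) := by
          rw [Finset.mul_sum]
          refine Finset.sum_congr rfl fun i _ => ?_
          rw [abs_mul, abs_of_nonneg (by positivity : (0:ℝ) ≤ (m.descFactorial i : ℝ))]
          ring
  rw [integral_comp_eq_tsum μ (partialSum Y k) (hSmeas k) (pReal ((k:ℝ)*α))
    (fun m => pReal_nonneg hkα m) (hasSum_pReal_one _) (hdist k)
    (degFallingFactorial lam n) hg hsummable]
  calc ∑' m : ℕ, pReal ((k:ℝ)*α) m * degFallingFactorial lam n (m : ℝ)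
      = ∑' m : ℕ, ∑ i ∈ Finset.range (n+1),
          degStirling2 lam n i * (pReal ((k:ℝ)*α) m * (m.descFactorial i : ℝ)) := by
        refine tsum_congr fun m => ?_
        rw [degFF_nat_eq, Finset.mul_sum]
        exact Finset.sum_congr rfl fun i _ => by ring
    _ = ∑ i ∈ Finset.range (n+1), ∑' m : ℕ,
          degStirling2 lam n i * (pReal ((k:ℝ)*α) m * (m.descFactorial i : ℝ)) :=
        Summable.tsum_finsetSum (fun i _ =>
          ((hasSum_pReal_descFactorial ((k:ℝ)*α) i).summable).mul_left _)
    _ = ∑ i ∈ Finset.range (n+1), degStirling2 lam n i * ((k:ℝ)*α)^i := by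
        refine Finset.sum_congr rfl fun i _ => ?_
        rw [tsum_mul_left, (hasSum_pReal_descFactorial ((k:ℝ)*α) i).tsum_eq]
    _ = degBell lam n ((k:ℝ)*α) := rfl
end

section
/- Let Y be a real random variable with all moments finite, (Y_j)_{j≥1} mutually independent copies of Y, S_0 = 0, S_k = Y_1 + ⋯ + Y_k. For every n ≥ 0, every integer r ≥ 1 and every real x, F^{(r,Y)}_{n,λ}(x) = (1/(r−1)!) ∫_0^∞ y^{r−1} φ^Y_{n,λ}(x·y) e^{−y} dy. -/
open MeasureTheory ProbabilityTheory Finset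

/-- The probabilistic degenerate Bell polynomials associated with `Y`. -/
noncomputable def probDegBell {Ω : Type*} [MeasurableSpace Ω] (μ : Measure Ω)
    (Y : ℕ → Ω → ℝ) (lam : ℝ) (n : ℕ) (x : ℝ) : ℝ :=
  ∑ k ∈ Finset.range (n + 1), probDegStirling2 μ Y lam n k * x ^ k

/-- The probabilistic degenerate Fubini polynomials of order `r` associated with `Y`. -/
noncomputable def probDegFubiniOrder {Ω : Type*} [MeasurableSpace Ω] (μ : Measure Ω)
    (Y : ℕ → Ω → ℝ) (lam : ℝ) (r n : ℕ) (x : ℝ) : ℝ :=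
  ∑ i ∈ Finset.range (n + 1),
    ((r + i - 1).choose i : ℝ) * i.factorial * probDegStirling2 μ Y lam n i * x ^ i

lemma aux_integrable (m : ℕ) :
    IntegrableOn (fun y : ℝ => y ^ m * Real.exp (-y)) (Set.Ioi (0:ℝ)) := by
  have h := Real.GammaIntegral_convergent (s := (m + 1 : ℝ)) (by positivity)
  refine (h.congr_fun ?_ measurableSet_Ioi)
  intro y hy
  simp only [add_sub_cancel_right, Real.rpow_natCast]
  ring

lemma aux_integral (m : ℕ) :
    ∫ y in Set.Ioi (0:ℝ), y ^ m * Real.exp (-y) = m.factorial := by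
  have h := Real.Gamma_nat_eq_factorial m
  rw [Real.Gamma_eq_integral (by positivity)] at h
  rw [← h]
  refine setIntegral_congr_fun measurableSet_Ioi fun y hy => ?_
  simp only [add_sub_cancel_right, Real.rpow_natCast]
  ring

theorem probDegFubiniOrder_eq_integral
    {Ω : Type*} [MeasurableSpace Ω] (μ : Measure Ω) [IsProbabilityMeasure μ]
    (Y : ℕ → Ω → ℝ) (lam : ℝ)
    (hmeas : ∀ j, Measurable (Y j))
    (hindep : iIndepFun Y μ)
    (hident : ∀ j, IdentDistrib (Y j) (Y 0) μ μ)
    (hmom : ∀ m : ℕ, Integrable (fun ω => |Y 0 ω| ^ m) μ)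
    (n r : ℕ) (hr : 1 ≤ r) (x : ℝ) :
    probDegFubiniOrder μ Y lam r n x =
      (1 / (r - 1).factorial : ℝ) *
        ∫ y in Set.Ioi (0 : ℝ), y ^ (r - 1) * probDegBell μ Y lam n (x * y) * Real.exp (-y) := by
  set c : ℕ → ℝ := fun k => probDegStirling2 μ Y lam n k with hc
  have hint : (∫ y in Set.Ioi (0 : ℝ),
      y ^ (r - 1) * probDegBell μ Y lam n (x * y) * Real.exp (-y)) =
      ∑ k ∈ Finset.range (n + 1), c k * x ^ k * ((r - 1 + k).factorial : ℝ) := by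
    have h1 : (fun y : ℝ => y ^ (r - 1) * probDegBell μ Y lam n (x * y) * Real.exp (-y)) =
        fun y => ∑ k ∈ Finset.range (n + 1),
          (c k * x ^ k) * (y ^ (r - 1 + k) * Real.exp (-y)) := by
      funext y
      unfold probDegBell
      rw [Finset.mul_sum, Finset.sum_mul]
      refine Finset.sum_congr rfl fun k _ => ?_
      rw [pow_add, mul_pow]
      ring
    rw [h1, integral_finset_sum _ fun k _ => ((aux_integrable (r - 1 + k)).const_mul _)]
    refine Finset.sum_congr rfl fun k _ => ?_
    rw [MeasureTheory.integral_const_mul, aux_integral]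
  rw [hint, Finset.mul_sum]
  unfold probDegFubiniOrder
  refine Finset.sum_congr rfl fun k _ => ?_
  have h2 : r + k - 1 = r - 1 + k := by omega
  have h3 : ((r - 1 + k).choose k : ℝ) * k.factorial * (r - 1).factorial =
      ((r - 1 + k).factorial : ℝ) := by
    have := Nat.choose_mul_factorial_mul_factorial (Nat.le_add_left k (r - 1))
    rw [Nat.add_sub_cancel] at this
    exact_mod_cast this
  have hfac : ((r - 1).factorial : ℝ) ≠ 0 := Nat.cast_ne_zero.2 (Nat.factorial_ne_zero _)
  rw [h2]
  field_simp
  rw [← h3]; ring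
end

section
/- Let Y be a real random variable with all moments finite, (Y_j)_{j≥1} mutually independent copies of Y, S_0 = 0, S_k = Y_1 + ⋯ + Y_k. For every n ≥ 0, every integer r ≥ 1 and every real x, F^{(r,Y)}_{n+1,λ}(x) = r·x · Σ_{k=0}^{n} Σ_{j=0}^{k} C(n,k) C(k,j) F^{(r,Y)}_{n−k,λ}(x) F^Y_{k−j,λ}(x) E[(Y)_{j+1,λ}]. -/
open MeasureTheory ProbabilityTheory Finset

lemma dff_zero (lam : ℝ) (x : ℝ) : degFallingFactorial lam 0 x = 1 := by
  simp [degFallingFactorial]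

lemma dff_succ (lam : ℝ) (n : ℕ) (x : ℝ) :
    degFallingFactorial lam (n+1) x = degFallingFactorial lam n x * (x - n * lam) :=
  Finset.prod_range_succ _ _

lemma dff_add (lam : ℝ) (n : ℕ) (s y : ℝ) :
    degFallingFactorial lam n (s + y)
      = ∑ k ∈ range (n+1), (n.choose k : ℝ) * degFallingFactorial lam k s *
          degFallingFactorial lam (n-k) y := by
  induction n with
  | zero => simp [degFallingFactorial]
  | succ n ih =>
    rw [dff_succ, ih, Finset.sum_mul]
    have key : ∀ k ∈ range (n+1),
        (n.choose k : ℝ) * degFallingFactorial lam k s * degFallingFactorial lam (n-k) y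
          * (s + y - n * lam)
        = (n.choose k : ℝ) * (degFallingFactorial lam (k+1) s * degFallingFactorial lam (n-k) y)
          + (n.choose k : ℝ) * (degFallingFactorial lam k s * degFallingFactorial lam (n-k+1) y) := by
      intro k hk
      rw [mem_range] at hk
      have hk' : k ≤ n := by omega
      have hcast : ((n - k : ℕ) : ℝ) = (n : ℝ) - (k : ℝ) := by
        push_cast [hk']; ring
      rw [dff_succ, dff_succ, hcast]
      ring
    rw [Finset.sum_congr rfl key, Finset.sum_add_distrib]
    have e1 : ∑ k ∈ range (n+2), ((n+1).choose k : ℝ) * degFallingFactorial lam k s *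
          degFallingFactorial lam (n+1-k) y
        = degFallingFactorial lam (n+1) y
          + ∑ k ∈ range (n+1),
              ((n.choose k : ℝ) * (degFallingFactorial lam (k+1) s * degFallingFactorial lam (n-k) y)
               + (n.choose (k+1) : ℝ) * (degFallingFactorial lam (k+1) s * degFallingFactorial lam (n-k) y)) := by
      rw [Finset.sum_range_succ']
      rw [add_comm]
      congr 1
      · simp [dff_zero]
      · apply Finset.sum_congr rfl
        intro k hk
        have h1 : (n+1).choose (k+1) = n.choose k + n.choose (k+1) := Nat.choose_succ_succ' n k
        have h2 : n + 1 - (k+1) = n - k := by omega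
        rw [h1, h2]
        push_cast
        ring
    have e2 : ∑ k ∈ range (n+1), (n.choose k : ℝ) *
          (degFallingFactorial lam k s * degFallingFactorial lam (n-k+1) y)
        = degFallingFactorial lam (n+1) y
          + ∑ k ∈ range (n+1), (n.choose (k+1) : ℝ) *
              (degFallingFactorial lam (k+1) s * degFallingFactorial lam (n-k) y) := by
      rw [Finset.sum_range_succ' (fun k => (n.choose k : ℝ) *
          (degFallingFactorial lam k s * degFallingFactorial lam (n-k+1) y))]
      rw [add_comm]
      congr 1
      · simp [dff_zero]
      · rw [Finset.sum_range_succ (fun k => (n.choose (k+1) : ℝ) *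
            (degFallingFactorial lam (k+1) s * degFallingFactorial lam (n-k) y))]
        simp only [Nat.choose_succ_self, Nat.cast_zero, zero_mul, add_zero]
        apply Finset.sum_congr rfl
        intro k hk
        rw [mem_range] at hk
        have h2 : n - (k+1) + 1 = n - k := by omega
        rw [h2]
    rw [e1, e2, Finset.sum_add_distrib]
    ring

namespace PFAux

open PowerSeries

variable (a : ℕ → ℕ → ℝ) (b : ℕ → ℝ)

noncomputable def Fser : ℝ⟦X⟧ := PowerSeries.mk fun n => b n / n.factorial

noncomputable def St (n k : ℕ) : ℝ :=
  (1 / k.factorial : ℝ) * ∑ j ∈ range (k+1), (-1:ℝ)^(k-j) * k.choose j * a j n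

lemma factc (n : ℕ) : (n.factorial : ℝ) ≠ 0 := Nat.cast_ne_zero.mpr n.factorial_ne_zero

lemma coeff_F_pow (ha0 : ∀ n, a 0 n = if n = 0 then 1 else 0)
    (harec : ∀ j n, a (j+1) n = ∑ k ∈ range (n+1), (n.choose k : ℝ) * a j k * b (n-k)) :
    ∀ j n, (coeff n) (Fser b ^ j) = a j n / n.factorial := by
  intro j
  induction j with
  | zero =>
    intro n
    rw [pow_zero, coeff_one, ha0]
    split <;> simp_all
  | succ j ih =>
    intro n
    rw [pow_succ, coeff_mul, Finset.Nat.sum_antidiagonal_eq_sum_range_succ_mk, harec,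
      Finset.sum_div]
    apply Finset.sum_congr rfl
    intro k hk
    rw [mem_range] at hk
    have hk' : k ≤ n := by omega
    rw [ih, Fser, coeff_mk, Nat.cast_choose ℝ hk']
    field_simp

lemma constantCoeff_F (hb0 : b 0 = 1) : constantCoeff (Fser b) = 1 := by
  rw [← coeff_zero_eq_constantCoeff_apply, Fser, coeff_mk, hb0]
  simp

lemma coeff_Fsub_pow_eq_zero (hb0 : b 0 = 1) {n k : ℕ} (h : n < k) :
    (coeff n) ((Fser b - 1) ^ k) = 0 := by
  have hX : (X : ℝ⟦X⟧) ∣ (Fser b - 1) := by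
    rw [X_dvd_iff, map_sub, constantCoeff_F b hb0, map_one, sub_self]
  have hXk : (X : ℝ⟦X⟧) ^ k ∣ (Fser b - 1) ^ k := pow_dvd_pow_of_dvd hX k
  exact (X_pow_dvd_iff.mp hXk) n h

lemma coeff_Fsub_pow (ha0 : ∀ n, a 0 n = if n = 0 then 1 else 0)
    (harec : ∀ j n, a (j+1) n = ∑ k ∈ range (n+1), (n.choose k : ℝ) * a j k * b (n-k))
    (n k : ℕ) :
    (coeff n) ((Fser b - 1) ^ k) = St a n k * k.factorial / n.factorial := by
  rw [sub_pow, map_sum]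
  have e : ∀ j ∈ range (k+1), (coeff n) ((-1 : ℝ⟦X⟧)^(j+k) * (Fser b)^j * 1^(k-j) * (k.choose j : ℝ⟦X⟧))
      = (-1:ℝ)^(k-j) * (k.choose j : ℝ) * a j n / n.factorial := by
    intro j hj
    rw [mem_range] at hj
    have hjk : j ≤ k := by omega
    have h1 : ((-1 : ℝ⟦X⟧)^(j+k) * (Fser b)^j * 1^(k-j) * (k.choose j : ℝ⟦X⟧))
        = PowerSeries.C ((-1:ℝ)^(j+k) * (k.choose j : ℝ)) * (Fser b)^j := by
      rw [one_pow, map_mul, map_pow, map_neg, map_one, map_natCast]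
      ring
    rw [h1, coeff_C_mul, coeff_F_pow a b ha0 harec]
    have h2 : (-1:ℝ)^(j+k) = (-1:ℝ)^(k-j) := by
      have : j + k = (k - j) + 2*j := by omega
      rw [this, pow_add, pow_mul, neg_one_sq, one_pow, mul_one]
    rw [h2]
    ring
  rw [Finset.sum_congr rfl e, ← Finset.sum_div]
  congr 1
  rw [St]
  field_simp

noncomputable def Fu (n : ℕ) (x : ℝ) : ℝ := ∑ k ∈ range (n+1), St a n k * k.factorial * x^k

noncomputable def FuO (r n : ℕ) (x : ℝ) : ℝ :=
  ∑ i ∈ range (n+1), ((r+i-1).choose i : ℝ) * i.factorial * St a n i * x^i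

noncomputable def Gser (r : ℕ) (x : ℝ) : ℝ⟦X⟧ :=
  PowerSeries.mk fun n => FuO a r n x / n.factorial

variable (ha0 : ∀ n, a 0 n = if n = 0 then 1 else 0) (hb0 : b 0 = 1)
  (harec : ∀ j n, a (j+1) n = ∑ k ∈ range (n+1), (n.choose k : ℝ) * a j k * b (n-k))

include ha0 hb0 harec

lemma coeff_G (x : ℝ) (r n N : ℕ) (hnN : n < N) :
    (coeff n) (Gser a r x) =
      ∑ i ∈ range N, ((r+i-1).choose i : ℝ) * x^i * (coeff n) ((Fser b - 1)^i) := by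
  rw [Gser, coeff_mk, FuO, Finset.sum_div]
  rw [← Finset.sum_subset (Finset.range_subset_range.mpr hnN)]
  · apply Finset.sum_congr rfl
    intro i hi
    rw [coeff_Fsub_pow a b ha0 harec]
    ring
  · intro i hi hni
    rw [mem_range] at hi hni
    rw [coeff_Fsub_pow_eq_zero b hb0 (by omega)]
    ring

omit ha0 hb0 harec in
lemma coeff_mul_congr (Cc A B : ℝ⟦X⟧) (n : ℕ)
    (h : ∀ q ≤ n, (coeff q) A = (coeff q) B) :
    (coeff n) (Cc * A) = (coeff n) (Cc * B) := by
  rw [coeff_mul, coeff_mul]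
  apply Finset.sum_congr rfl
  intro p hp
  rw [HasAntidiagonal.mem_antidiagonal] at hp
  rw [h p.2 (by omega)]

omit hb0 harec in
lemma G_zero (x : ℝ) : Gser a 0 x = 1 := by
  ext n
  rw [Gser, coeff_mk, coeff_one, FuO]
  have e : ∀ i ∈ range (n+1), ((0+i-1).choose i : ℝ) * i.factorial * St a n i * x^i
      = if i = 0 then a 0 n else 0 := by
    intro i hi
    rcases Nat.eq_zero_or_pos i with h0 | h0
    · subst h0
      simp [St, ha0]
    · rw [if_neg (by omega), Nat.choose_eq_zero_of_lt (by omega)]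
      simp
  rw [Finset.sum_congr rfl e, Finset.sum_ite_eq' (range (n+1)) 0]
  rw [if_pos (by simp)]
  rw [ha0]
  split <;> simp_all

lemma step_G (x : ℝ) (r : ℕ) :
    (1 - PowerSeries.C x * (Fser b - 1)) * Gser a (r+1) x = Gser a r x := by
  ext n
  set s : ℕ → ℝ := fun i => (coeff n) ((Fser b - 1)^i) with hs
  have hGr1 : ∀ q ≤ n, (coeff q) (Gser a (r+1) x)
      = (coeff q) (∑ i ∈ range (n+1), PowerSeries.C (((r+1+i-1).choose i : ℝ) * x^i) * (Fser b - 1)^i) := by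
    intro q hq
    rw [coeff_G a b ha0 hb0 harec x (r+1) q (n+1) (by omega), map_sum]
    apply Finset.sum_congr rfl
    intro i _
    rw [coeff_C_mul]
  rw [coeff_mul_congr _ _ _ _ hGr1]
  rw [sub_mul, one_mul, map_sub, Finset.mul_sum, map_sum, map_sum]
  have e1 : ∀ i ∈ range (n+1),
      (coeff n) (PowerSeries.C (((r+1+i-1).choose i : ℝ) * x^i) * (Fser b - 1)^i)
      = ((r+i).choose i : ℝ) * x^i * s i := by
    intro i _
    rw [coeff_C_mul]
    have h : r + 1 + i - 1 = r + i := by omega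
    rw [h, hs]
  have e2 : ∀ i ∈ range (n+1),
      (coeff n) (PowerSeries.C x * (Fser b - 1) *
        (PowerSeries.C (((r+1+i-1).choose i : ℝ) * x^i) * (Fser b - 1)^i))
      = ((r+i).choose i : ℝ) * x^(i+1) * s (i+1) := by
    intro i _
    have harr : PowerSeries.C x * (Fser b - 1) *
        (PowerSeries.C (((r+1+i-1).choose i : ℝ) * x^i) * (Fser b - 1)^i)
        = PowerSeries.C (((r+1+i-1).choose i : ℝ) * x^(i+1)) * (Fser b - 1)^(i+1) := by
      rw [map_mul, map_mul, map_pow, map_pow]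
      ring
    rw [harr, coeff_C_mul]
    have h : r + 1 + i - 1 = r + i := by omega
    rw [h, hs]
  rw [Finset.sum_congr rfl e1, Finset.sum_congr rfl e2]
  rw [coeff_G a b ha0 hb0 harec x r n (n+1) (by omega)]
  have hT1 : ∑ i ∈ range (n+1), ((r+i).choose i : ℝ) * x^i * s i
      = (∑ i ∈ range n, ((r+(i+1)).choose (i+1) : ℝ) * x^(i+1) * s (i+1)) + s 0 := by
    rw [Finset.sum_range_succ' (fun i => ((r+i).choose i : ℝ) * x^i * s i)]
    simp
  have hT2 : ∑ i ∈ range (n+1), ((r+i).choose i : ℝ) * x^(i+1) * s (i+1)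
      = ∑ i ∈ range n, ((r+i).choose i : ℝ) * x^(i+1) * s (i+1) := by
    rw [Finset.sum_range_succ]
    have hsn1 : s (n+1) = 0 := coeff_Fsub_pow_eq_zero b hb0 (by omega)
    rw [hsn1]
    ring
  have hRHS : ∑ i ∈ range (n+1), ((r+i-1).choose i : ℝ) * x^i * (coeff n) ((Fser b - 1)^i)
      = (∑ i ∈ range n, ((r+i).choose (i+1) : ℝ) * x^(i+1) * s (i+1)) + s 0 := by
    rw [Finset.sum_range_succ' (fun i => ((r+i-1).choose i : ℝ) * x^i * (coeff n) ((Fser b - 1)^i))]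
    congr 1
    simp [hs]
  rw [hT1, hT2, hRHS]
  have hdiff : ∑ i ∈ range n, ((r+(i+1)).choose (i+1) : ℝ) * x^(i+1) * s (i+1)
        - ∑ i ∈ range n, ((r+i).choose i : ℝ) * x^(i+1) * s (i+1)
      = ∑ i ∈ range n, ((r+i).choose (i+1) : ℝ) * x^(i+1) * s (i+1) := by
    rw [← Finset.sum_sub_distrib]
    apply Finset.sum_congr rfl
    intro i _
    have h1 : (r+(i+1)).choose (i+1) = (r+i).choose i + (r+i).choose (i+1) := by
      have h : r + (i+1) = (r+i) + 1 := by omega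
      rw [h, Nat.choose_succ_succ']
    rw [h1]
    push_cast
    ring
  linarith [hdiff]

lemma inv_G (x : ℝ) : ∀ r : ℕ, (1 - PowerSeries.C x * (Fser b - 1))^r * Gser a r x = 1 := by
  intro r
  induction r with
  | zero => rw [pow_zero, one_mul, G_zero a ha0 x]
  | succ r ih =>
    calc (1 - PowerSeries.C x * (Fser b - 1))^(r+1) * Gser a (r+1) x
        = (1 - PowerSeries.C x * (Fser b - 1))^r *
            ((1 - PowerSeries.C x * (Fser b - 1)) * Gser a (r+1) x) := by ring
      _ = (1 - PowerSeries.C x * (Fser b - 1))^r * Gser a r x := by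
            rw [step_G a b ha0 hb0 harec x r]
      _ = 1 := ih

omit ha0 harec in
lemma one_sub_ne (x : ℝ) : (1 - PowerSeries.C x * (Fser b - 1)) ≠ 0 := by
  intro h
  have := congrArg (constantCoeff) h
  rw [map_sub, map_one, map_mul, constantCoeff_C, map_sub, constantCoeff_F b hb0, map_one,
    sub_self, mul_zero, sub_zero, map_zero] at this
  exact one_ne_zero this

lemma G_split (x : ℝ) (r : ℕ) : Gser a (r+1) x = Gser a r x * Gser a 1 x := by
  have hne : (1 - PowerSeries.C x * (Fser b - 1))^(r+1) ≠ 0 :=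
    pow_ne_zero _ (one_sub_ne b hb0 x)
  apply mul_left_cancel₀ hne
  rw [inv_G a b ha0 hb0 harec x (r+1)]
  calc (1 : ℝ⟦X⟧)
      = ((1 - PowerSeries.C x * (Fser b - 1))^r * Gser a r x) *
          ((1 - PowerSeries.C x * (Fser b - 1))^1 * Gser a 1 x) := by
        rw [inv_G a b ha0 hb0 harec x r, inv_G a b ha0 hb0 harec x 1, one_mul]
    _ = (1 - PowerSeries.C x * (Fser b - 1))^(r+1) * (Gser a r x * Gser a 1 x) := by ring

lemma deriv_G (x : ℝ) (m : ℕ) :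
    d⁄dX ℝ (Gser a (m+1) x) =
      ((m+1 : ℕ) : ℝ⟦X⟧) *
        ((d⁄dX ℝ (PowerSeries.C x * (Fser b - 1)) * Gser a 1 x) * Gser a (m+1) x) := by
  set u : ℝ⟦X⟧ := PowerSeries.C x * (Fser b - 1) with hu
  have h0 : d⁄dX ℝ ((1 - u)^(m+1) * Gser a (m+1) x) = 0 := by
    rw [inv_G a b ha0 hb0 harec x (m+1)]
    exact Derivation.map_one_eq_zero _
  rw [Derivation.leibniz] at h0
  have hpow : d⁄dX ℝ ((1 - u)^(m+1)) = -(((m+1 : ℕ) : ℝ⟦X⟧) * ((1-u)^m * d⁄dX ℝ u)) := by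
    rw [Derivation.leibniz_pow, Nat.add_sub_cancel, map_sub, Derivation.map_one_eq_zero, zero_sub,
      nsmul_eq_mul, smul_eq_mul]
    ring
  have key : ((1-u)^(m+1)) * d⁄dX ℝ (Gser a (m+1) x)
      = ((m+1:ℕ):ℝ⟦X⟧) * ((1-u)^m * d⁄dX ℝ u * Gser a (m+1) x) := by
    rw [hpow, smul_eq_mul, smul_eq_mul] at h0
    linear_combination h0
  have h1 : (1-u)^m * Gser a (m+1) x = Gser a 1 x := by
    rw [G_split a b ha0 hb0 harec x m]
    calc (1-u)^m * (Gser a m x * Gser a 1 x)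
        = ((1-u)^m * Gser a m x) * Gser a 1 x := by ring
      _ = Gser a 1 x := by rw [inv_G a b ha0 hb0 harec x m, one_mul]
  calc d⁄dX ℝ (Gser a (m+1) x)
      = ((1-u)^(m+1) * Gser a (m+1) x) * d⁄dX ℝ (Gser a (m+1) x) := by
        rw [inv_G a b ha0 hb0 harec x (m+1), one_mul]
    _ = Gser a (m+1) x * ((1-u)^(m+1) * d⁄dX ℝ (Gser a (m+1) x)) := by ring
    _ = Gser a (m+1) x * (((m+1:ℕ):ℝ⟦X⟧) * ((1-u)^m * d⁄dX ℝ u * Gser a (m+1) x)) := by rw [key]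
    _ = ((m+1:ℕ):ℝ⟦X⟧) * (((1-u)^m * Gser a (m+1) x) * d⁄dX ℝ u * Gser a (m+1) x) := by ring
    _ = ((m+1:ℕ):ℝ⟦X⟧) * ((d⁄dX ℝ u * Gser a 1 x) * Gser a (m+1) x) := by rw [h1]; ring

omit ha0 hb0 harec in
lemma FuO_one (x : ℝ) (q : ℕ) : FuO a 1 q x = Fu a q x := by
  rw [FuO, Fu]
  apply Finset.sum_congr rfl
  intro i _
  have h : 1 + i - 1 = i := by omega
  rw [h, Nat.choose_self]
  push_cast
  ring

omit ha0 hb0 harec in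
lemma coeff_Du (x : ℝ) (q : ℕ) :
    (coeff q) (d⁄dX ℝ (PowerSeries.C x * (Fser b - 1))) = x * b (q+1) / q.factorial := by
  rw [PowerSeries.coeff_derivative, coeff_C_mul, map_sub, Fser, coeff_mk, PowerSeries.coeff_one,
    if_neg (Nat.succ_ne_zero q), Nat.factorial_succ]
  push_cast
  have h1 : (q.factorial : ℝ) ≠ 0 := factc q
  have h2 : ((q:ℝ) + 1) ≠ 0 := by positivity
  field_simp
  ring

theorem main_abstract (x : ℝ) (n m : ℕ) :
    FuO a (m+1) (n+1) x = ((m:ℝ)+1) * x * ∑ k ∈ range (n+1), ∑ j ∈ range (k+1),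
      (n.choose k : ℝ) * (k.choose j : ℝ) * FuO a (m+1) (n-k) x * Fu a (k-j) x * b (j+1) := by
  have hD := congrArg (coeff n) (deriv_G a b ha0 hb0 harec x m)
  rw [PowerSeries.coeff_derivative] at hD
  have hL : (coeff (n+1)) (Gser a (m+1) x) * ((n:ℝ)+1) = FuO a (m+1) (n+1) x / n.factorial := by
    rw [Gser, coeff_mk, Nat.factorial_succ]
    have h1 : (n.factorial : ℝ) ≠ 0 := factc n
    have h2 : ((n:ℝ) + 1) ≠ 0 := by positivity
    push_cast
    field_simp
  have hR : (coeff n) (((m+1:ℕ) : ℝ⟦X⟧) *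
        ((d⁄dX ℝ (PowerSeries.C x * (Fser b - 1)) * Gser a 1 x) * Gser a (m+1) x))
      = ((m:ℝ)+1) * ∑ k ∈ range (n+1),
          (∑ j ∈ range (k+1), (x * b (j+1) / j.factorial) * (Fu a (k-j) x / (k-j).factorial))
            * (FuO a (m+1) (n-k) x / (n-k).factorial) := by
    rw [← map_natCast (PowerSeries.C) (m+1), coeff_C_mul, coeff_mul,
      Finset.Nat.sum_antidiagonal_eq_sum_range_succ_mk]
    push_cast
    congr 1
    apply Finset.sum_congr rfl
    intro k hk
    congr 1
    · rw [coeff_mul, Finset.Nat.sum_antidiagonal_eq_sum_range_succ_mk]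
      apply Finset.sum_congr rfl
      intro j hj
      rw [coeff_Du b x j, Gser, coeff_mk, FuO_one a x (k-j)]
    · rw [Gser, coeff_mk]
  rw [hR] at hD
  have hcomb : FuO a (m+1) (n+1) x / n.factorial
      = ((m:ℝ)+1) * ∑ k ∈ range (n+1),
          (∑ j ∈ range (k+1), (x * b (j+1) / j.factorial) * (Fu a (k-j) x / (k-j).factorial))
            * (FuO a (m+1) (n-k) x / (n-k).factorial) := by
    rw [← hL, hD]
  have hmain : FuO a (m+1) (n+1) x = (n.factorial : ℝ) * (((m:ℝ)+1) * ∑ k ∈ range (n+1),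
          (∑ j ∈ range (k+1), (x * b (j+1) / j.factorial) * (Fu a (k-j) x / (k-j).factorial))
            * (FuO a (m+1) (n-k) x / (n-k).factorial)) := by
    rw [← hcomb]
    field_simp
  rw [hmain]
  have hsum : (n.factorial : ℝ) * ∑ k ∈ range (n+1),
        (∑ j ∈ range (k+1), (x * b (j+1) / j.factorial) * (Fu a (k-j) x / (k-j).factorial))
          * (FuO a (m+1) (n-k) x / (n-k).factorial)
      = x * ∑ k ∈ range (n+1), ∑ j ∈ range (k+1),
          (n.choose k : ℝ) * (k.choose j : ℝ) * FuO a (m+1) (n-k) x * Fu a (k-j) x * b (j+1) := by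
    rw [Finset.mul_sum, Finset.mul_sum]
    apply Finset.sum_congr rfl
    intro k hk
    rw [mem_range] at hk
    have hk' : k ≤ n := by omega
    rw [Finset.sum_mul, Finset.mul_sum, Finset.mul_sum]
    apply Finset.sum_congr rfl
    intro j hj
    rw [mem_range] at hj
    have hj' : j ≤ k := by omega
    rw [Nat.cast_choose ℝ hk', Nat.cast_choose ℝ hj']
    have c1 : (n.factorial : ℝ) ≠ 0 := factc n
    have c2 : (k.factorial : ℝ) ≠ 0 := factc k
    have c3 : (j.factorial : ℝ) ≠ 0 := factc j
    have c4 : ((k-j).factorial : ℝ) ≠ 0 := factc (k-j)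
    have c5 : ((n-k).factorial : ℝ) ≠ 0 := factc (n-k)
    field_simp
  calc (n.factorial : ℝ) * (((m:ℝ)+1) * ∑ k ∈ range (n+1),
        (∑ j ∈ range (k+1), (x * b (j+1) / j.factorial) * (Fu a (k-j) x / (k-j).factorial))
          * (FuO a (m+1) (n-k) x / (n-k).factorial))
      = ((m:ℝ)+1) * ((n.factorial : ℝ) * ∑ k ∈ range (n+1),
        (∑ j ∈ range (k+1), (x * b (j+1) / j.factorial) * (Fu a (k-j) x / (k-j).factorial))
          * (FuO a (m+1) (n-k) x / (n-k).factorial)) := by ring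
    _ = ((m:ℝ)+1) * (x * ∑ k ∈ range (n+1), ∑ j ∈ range (k+1),
          (n.choose k : ℝ) * (k.choose j : ℝ) * FuO a (m+1) (n-k) x * Fu a (k-j) x * b (j+1)) := by
        rw [hsum]
    _ = ((m:ℝ)+1) * x * ∑ k ∈ range (n+1), ∑ j ∈ range (k+1),
          (n.choose k : ℝ) * (k.choose j : ℝ) * FuO a (m+1) (n-k) x * Fu a (k-j) x * b (j+1) := by
        ring
end PFAux


lemma meas_dff (lam : ℝ) (n : ℕ) : Measurable (fun y : ℝ => degFallingFactorial lam n y) := by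
  unfold degFallingFactorial
  exact Finset.measurable_prod _ (fun j _ => measurable_id.sub measurable_const)

section Prob

variable {Ω : Type*} [MeasurableSpace Ω] {μ : Measure Ω} [IsProbabilityMeasure μ]

omit [IsProbabilityMeasure μ] in
lemma integrable_dff (lam : ℝ) {f : Ω → ℝ} (hf : Measurable f)
    (hm : ∀ m : ℕ, Integrable (fun ω => |f ω| ^ m) μ) (n : ℕ) :
    Integrable (fun ω => degFallingFactorial lam n (f ω)) μ := by
  have hint : Integrable (fun ω => (|f ω| + (n:ℝ) * |lam|)^n) μ := by
    have he : (fun ω => (|f ω| + (n:ℝ)*|lam|)^n)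
        = fun ω => ∑ k ∈ range (n+1), |f ω|^k * ((n:ℝ)*|lam|)^(n-k) * (n.choose k) := by
      funext ω; rw [add_pow]
    rw [he]
    apply integrable_finset_sum
    intro k _
    exact ((hm k).mul_const _).mul_const _
  have hasm : AEStronglyMeasurable (fun ω => degFallingFactorial lam n (f ω)) μ :=
    ((meas_dff lam n).comp hf).aestronglyMeasurable
  apply Integrable.mono' hint hasm
  apply Filter.Eventually.of_forall
  intro ω
  rw [Real.norm_eq_abs, show degFallingFactorial lam n (f ω) = ∏ j ∈ range n, (f ω - j * lam) from rfl, Finset.abs_prod]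
  calc ∏ j ∈ range n, |f ω - j*lam| ≤ ∏ j ∈ range n, (|f ω| + (n:ℝ) * |lam|) := by
        apply Finset.prod_le_prod
        · intro j _; exact abs_nonneg _
        · intro j hj
          rw [mem_range] at hj
          calc |f ω - j*lam| ≤ |f ω| + |(j:ℝ)*lam| := abs_sub _ _
            _ = |f ω| + j * |lam| := by rw [abs_mul, Nat.abs_cast]
            _ ≤ |f ω| + n * |lam| := by
                have hj' : (j:ℝ) ≤ n := by exact_mod_cast hj.le
                gcongr
    _ = (|f ω| + (n:ℝ)*|lam|)^n := by rw [Finset.prod_const, Finset.card_range]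

variable {Y : ℕ → Ω → ℝ}

omit [IsProbabilityMeasure μ] in
lemma abs_mom (hident : ∀ j, IdentDistrib (Y j) (Y 0) μ μ)
    (hmom : ∀ m : ℕ, Integrable (fun ω => |Y 0 ω| ^ m) μ) (j m : ℕ) :
    Integrable (fun ω => |Y j ω| ^ m) μ := by
  have h : IdentDistrib (fun ω => |Y j ω|^m) (fun ω => |Y 0 ω|^m) μ μ :=
    (hident j).comp ((measurable_id.abs).pow_const m)
  exact h.integrable_iff.mpr (hmom m)

lemma meas_pS (hmeas : ∀ j, Measurable (Y j)) (j : ℕ) : Measurable (partialSum Y j) := by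
  unfold partialSum
  exact Finset.measurable_sum _ (fun i _ => hmeas i)

lemma pS_mom (hmeas : ∀ j, Measurable (Y j))
    (hident : ∀ j, IdentDistrib (Y j) (Y 0) μ μ)
    (hmom : ∀ m : ℕ, Integrable (fun ω => |Y 0 ω| ^ m) μ) (j : ℕ) :
    ∀ m : ℕ, Integrable (fun ω => |partialSum Y j ω| ^ m) μ := by
  induction j with
  | zero =>
    intro m
    have he : (fun ω => |partialSum Y 0 ω|^m) = fun _ => |(0:ℝ)|^m := by
      funext ω; simp [partialSum]
    rw [he]
    exact integrable_const _
  | succ j ih =>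
    intro m
    have hint : Integrable (fun ω => (2:ℝ)^m * (|partialSum Y j ω|^m + |Y j ω|^m)) μ :=
      ((ih m).add (abs_mom hident hmom j m)).const_mul _
    apply Integrable.mono' hint
    · apply AEStronglyMeasurable.pow ?_ _
      exact (Measurable.abs (meas_pS hmeas (j+1))).aestronglyMeasurable
    · apply Filter.Eventually.of_forall
      intro ω
      have hps : partialSum Y (j+1) ω = partialSum Y j ω + Y j ω := by
        rw [partialSum, Finset.sum_range_succ]; rfl
      rw [Real.norm_eq_abs, abs_of_nonneg (pow_nonneg (abs_nonneg _) m), hps]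
      set s := partialSum Y j ω
      calc |s + Y j ω|^m ≤ (|s| + |Y j ω|)^m := by
            apply pow_le_pow_left₀ (abs_nonneg _) (abs_add_le _ _)
        _ ≤ (2 * max |s| |Y j ω|)^m := by
            apply pow_le_pow_left₀ (by positivity)
            rcases le_total |s| |Y j ω| with h | h
            · rw [max_eq_right h]; linarith
            · rw [max_eq_left h]; linarith
        _ = 2^m * (max |s| |Y j ω|)^m := by rw [mul_pow]
        _ ≤ 2^m * (|s|^m + |Y j ω|^m) := by
            gcongr
            rcases le_total |s| |Y j ω| with h | h
            · rw [max_eq_right h]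
              have : (0:ℝ) ≤ |s|^m := by positivity
              linarith
            · rw [max_eq_left h]
              have : (0:ℝ) ≤ |Y j ω|^m := by positivity
              linarith


lemma dff_add' (lam : ℝ) (n : ℕ) (s y : ℝ) :
    degFallingFactorial lam n (s + y)
      = ∑ k ∈ range (n+1), (n.choose k : ℝ) * (degFallingFactorial lam k s *
          degFallingFactorial lam (n-k) y) := by
  rw [dff_add]
  apply Finset.sum_congr rfl
  intro k _
  ring

lemma a_rec (hmeas : ∀ j, Measurable (Y j))
    (hindep : iIndepFun Y μ)
    (hident : ∀ j, IdentDistrib (Y j) (Y 0) μ μ)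
    (hmom : ∀ m : ℕ, Integrable (fun ω => |Y 0 ω| ^ m) μ)
    (lam : ℝ) (j n : ℕ) :
    ∫ ω, degFallingFactorial lam n (partialSum Y (j+1) ω) ∂μ
      = ∑ k ∈ range (n+1), (n.choose k : ℝ) *
          (∫ ω, degFallingFactorial lam k (partialSum Y j ω) ∂μ) *
          (∫ ω, degFallingFactorial lam (n-k) (Y 0 ω) ∂μ) := by
  have hSY : IndepFun (partialSum Y j) (Y j) μ := by
    have h := hindep.indepFun_finsetSum_of_notMem hmeas (Finset.notMem_range_self (n := j))
    have he : partialSum Y j = ∑ i ∈ range j, Y i := by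
      funext ω; rw [partialSum, Finset.sum_apply]
    rwa [← he] at h
  have hrw : (fun ω => degFallingFactorial lam n (partialSum Y (j+1) ω))
      = fun ω => ∑ k ∈ range (n+1), (n.choose k : ℝ) *
          (degFallingFactorial lam k (partialSum Y j ω) *
           degFallingFactorial lam (n-k) (Y j ω)) := by
    funext ω
    have hps : partialSum Y (j+1) ω = partialSum Y j ω + Y j ω := by
      rw [partialSum, Finset.sum_range_succ]; rfl
    rw [hps, dff_add']
  rw [hrw, integral_finset_sum]
  · apply Finset.sum_congr rfl
    intro k _
    have hcomp : IndepFun (fun ω => degFallingFactorial lam k (partialSum Y j ω))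
        (fun ω => degFallingFactorial lam (n-k) (Y j ω)) μ :=
      hSY.comp (meas_dff lam k) (meas_dff lam (n-k))
    have hIS : Integrable (fun ω => degFallingFactorial lam k (partialSum Y j ω)) μ :=
      integrable_dff lam (meas_pS hmeas j) (pS_mom hmeas hident hmom j) k
    have hIY : Integrable (fun ω => degFallingFactorial lam (n-k) (Y j ω)) μ :=
      integrable_dff lam (hmeas j) (fun m => abs_mom hident hmom j m) (n-k)
    have hmul : ∫ ω, degFallingFactorial lam k (partialSum Y j ω) *
          degFallingFactorial lam (n-k) (Y j ω) ∂μ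
        = (∫ ω, degFallingFactorial lam k (partialSum Y j ω) ∂μ) *
          ∫ ω, degFallingFactorial lam (n-k) (Y j ω) ∂μ :=
      IndepFun.integral_fun_mul_eq_mul_integral hcomp hIS.aestronglyMeasurable hIY.aestronglyMeasurable
    have hid : ∫ ω, degFallingFactorial lam (n-k) (Y j ω) ∂μ
        = ∫ ω, degFallingFactorial lam (n-k) (Y 0 ω) ∂μ :=
      ((hident j).comp (meas_dff lam (n-k))).integral_eq
    rw [MeasureTheory.integral_const_mul, hmul, hid, mul_assoc]
  · intro k _
    have hcomp : IndepFun (fun ω => degFallingFactorial lam k (partialSum Y j ω))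
        (fun ω => degFallingFactorial lam (n-k) (Y j ω)) μ :=
      hSY.comp (meas_dff lam k) (meas_dff lam (n-k))
    have hIS : Integrable (fun ω => degFallingFactorial lam k (partialSum Y j ω)) μ :=
      integrable_dff lam (meas_pS hmeas j) (pS_mom hmeas hident hmom j) k
    have hIY : Integrable (fun ω => degFallingFactorial lam (n-k) (Y j ω)) μ :=
      integrable_dff lam (hmeas j) (fun m => abs_mom hident hmom j m) (n-k)
    exact (hcomp.integrable_mul hIS hIY).const_mul _

lemma a_zero (lam : ℝ) (n : ℕ) :
    ∫ ω, degFallingFactorial lam n (partialSum Y 0 ω) ∂μ = if n = 0 then 1 else 0 := by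
  have he : (fun ω => degFallingFactorial lam n (partialSum Y 0 ω))
      = fun _ : Ω => if n = 0 then (1:ℝ) else 0 := by
    funext ω
    have h0 : partialSum Y 0 ω = 0 := by simp [partialSum]
    rw [h0]
    rcases Nat.eq_zero_or_pos n with h | h
    · subst h; simp [degFallingFactorial]
    · rw [if_neg (by omega)]
      apply Finset.prod_eq_zero (Finset.mem_range.mpr h)
      norm_num
  rw [he, integral_const]
  simp

lemma b_zero (lam : ℝ) : ∫ ω, degFallingFactorial lam 0 (Y 0 ω) ∂μ = 1 := by
  simp [dff_zero]

end Prob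

theorem probDegFubiniOrder_succ
    {Ω : Type*} [MeasurableSpace Ω] (μ : Measure Ω) [IsProbabilityMeasure μ]
    (Y : ℕ → Ω → ℝ) (lam : ℝ)
    (hmeas : ∀ j, Measurable (Y j))
    (hindep : iIndepFun Y μ)
    (hident : ∀ j, IdentDistrib (Y j) (Y 0) μ μ)
    (hmom : ∀ m : ℕ, Integrable (fun ω => |Y 0 ω| ^ m) μ)
    (n r : ℕ) (hr : 1 ≤ r) (x : ℝ) :
    probDegFubiniOrder μ Y lam r (n + 1) x =
      r * x * ∑ k ∈ Finset.range (n + 1), ∑ j ∈ Finset.range (k + 1),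
        (n.choose k : ℝ) * (k.choose j : ℝ) * probDegFubiniOrder μ Y lam r (n - k) x *
          probDegFubini μ Y lam (k - j) x *
          ∫ ω, degFallingFactorial lam (j + 1) (Y 0 ω) ∂μ := by
  obtain ⟨m, rfl⟩ : ∃ m, r = m + 1 := ⟨r - 1, by omega⟩
  have ha0 : ∀ n', (fun j n' => ∫ ω, degFallingFactorial lam n' (partialSum Y j ω) ∂μ) 0 n'
      = if n' = 0 then (1:ℝ) else 0 := fun n' => a_zero lam n'
  have hb0 : (fun n' => ∫ ω, degFallingFactorial lam n' (Y 0 ω) ∂μ) 0 = 1 := b_zero lam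
  have harec : ∀ j n', (fun j n' => ∫ ω, degFallingFactorial lam n' (partialSum Y j ω) ∂μ) (j+1) n'
      = ∑ k ∈ range (n'+1), (n'.choose k : ℝ) *
          (fun j n' => ∫ ω, degFallingFactorial lam n' (partialSum Y j ω) ∂μ) j k *
          (fun n' => ∫ ω, degFallingFactorial lam n' (Y 0 ω) ∂μ) (n'-k) :=
    fun j n' => a_rec hmeas hindep hident hmom lam j n'
  have key := PFAux.main_abstract
    (fun j n' => ∫ ω, degFallingFactorial lam n' (partialSum Y j ω) ∂μ)
    (fun n' => ∫ ω, degFallingFactorial lam n' (Y 0 ω) ∂μ) ha0 hb0 harec x n m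
  have eFuO : ∀ r' n', PFAux.FuO
      (fun j n' => ∫ ω, degFallingFactorial lam n' (partialSum Y j ω) ∂μ) r' n' x
      = probDegFubiniOrder μ Y lam r' n' x := fun _ _ => rfl
  have eFu : ∀ n', PFAux.Fu
      (fun j n' => ∫ ω, degFallingFactorial lam n' (partialSum Y j ω) ∂μ) n' x
      = probDegFubini μ Y lam n' x := fun _ => rfl
  simp only [eFuO, eFu] at key
  rw [key]
  push_cast
  ring
end

section
/- Let 0 ≤ p ≤ 1 and let Y be a Bernoulli random variable with probability of success p (P(Y = 1) = p, P(Y = 0) = 1 − p), with (Y_j)_{j≥1} mutually independent copies of Y, S_0 = 0, S_k = Y_1 + ⋯ + Y_k. Then for every n ≥ 0 and every real x, F^Y_{n,λ}(x) = F_{n,λ}(x·p), where F_{n,λ} is the degenerate Fubini polynomial. -/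
open MeasureTheory ProbabilityTheory Finset

/-- The degenerate Fubini polynomials. -/
noncomputable def degFubini (lam : ℝ) (n : ℕ) (x : ℝ) : ℝ :=
  ∑ k ∈ Finset.range (n + 1), degStirling2 lam n k * k.factorial * x ^ k

/-- Binomial weights `C(j,m) p^m (1-p)^(j-m)`. -/
noncomputable def binomW (p : ℝ) (j m : ℕ) : ℝ := (j.choose m : ℝ) * p ^ m * (1 - p) ^ (j - m)

lemma binomW_nonneg {p : ℝ} (hp0 : 0 ≤ p) (hp1 : p ≤ 1) (j m : ℕ) : 0 ≤ binomW p j m := by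
  unfold binomW
  have : (0:ℝ) ≤ 1 - p := by linarith
  positivity

lemma binomW_zero_of_lt {p : ℝ} {j m : ℕ} (h : j < m) : binomW p j m = 0 := by
  simp [binomW, Nat.choose_eq_zero_of_lt h]

lemma binomW_succ (p : ℝ) (j m : ℕ) :
    binomW p (j+1) (m+1) = binomW p j (m+1) * (1-p) + binomW p j m * p := by
  unfold binomW
  rcases lt_trichotomy j m with h | rfl | h
  · rw [Nat.choose_eq_zero_of_lt h, Nat.choose_eq_zero_of_lt (by omega),
      Nat.choose_eq_zero_of_lt (by omega)]
    ring
  · simp [Nat.choose_succ_self, pow_succ]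
  · have h1 : j + 1 - (m + 1) = j - m := by omega
    have h2 : j - m = (j - (m+1)) + 1 := by omega
    rw [h1, Nat.choose_succ_succ, h2]
    push_cast
    ring

lemma key_alg (p : ℝ) (f : ℕ → ℝ) (k : ℕ) :
    ∑ j ∈ range (k+1), (-1:ℝ)^(k-j) * (k.choose j) * (∑ m ∈ range (j+1), binomW p j m * f m)
      = p^k * ∑ m ∈ range (k+1), (-1:ℝ)^(k-m) * (k.choose m) * f m := by
  have step1 : ∀ j ∈ range (k+1),
      (-1:ℝ)^(k-j) * (k.choose j) * (∑ m ∈ range (j+1), binomW p j m * f m)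
        = ∑ m ∈ range (k+1), (-1:ℝ)^(k-j) * (k.choose j) * (binomW p j m * f m) := by
    intro j hj
    rw [Finset.mul_sum]
    refine Finset.sum_subset (Finset.range_subset_range.2 (by simp at hj; omega)) ?_
    intro m hm hm'
    simp only [Finset.mem_range, not_lt] at hm'
    rw [binomW_zero_of_lt (by omega)]
    ring
  rw [Finset.sum_congr rfl step1, Finset.sum_comm, Finset.mul_sum]
  refine Finset.sum_congr rfl ?_
  intro m hm
  simp only [Finset.mem_range] at hm
  have hmk : m ≤ k := by omega
  have e1 : ∑ j ∈ range (k+1), (-1:ℝ)^(k-j) * (k.choose j) * (binomW p j m * f m)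
      = ∑ j ∈ Finset.Ico m (k+1), (-1:ℝ)^(k-j) * (k.choose j) * (binomW p j m * f m) := by
    refine (Finset.sum_subset ?_ ?_).symm
    · intro j hj; simp only [Finset.mem_Ico] at hj; simp only [Finset.mem_range]; omega
    · intro j hj hj'
      simp only [Finset.mem_range] at hj
      simp only [Finset.mem_Ico, not_and, not_le] at hj'
      rw [binomW_zero_of_lt (by omega)]
      ring
  rw [e1, Finset.sum_Ico_eq_sum_range]
  have h2 : k + 1 - m = (k - m) + 1 := by omega
  rw [h2]
  have e2 : ∀ i ∈ range ((k-m)+1),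
      (-1:ℝ)^(k-(m+i)) * (k.choose (m+i)) * (binomW p (m+i) m * f m)
        = ((k.choose m : ℝ) * f m * p^m) * ((1-p)^i * (-1:ℝ)^((k-m)-i) * ((k-m).choose i)) := by
    intro i hi
    simp only [Finset.mem_range] at hi
    have hik : m + i ≤ k := by omega
    have hch : (k.choose (m+i) : ℝ) * ((m+i).choose m : ℝ)
        = (k.choose m : ℝ) * ((k-m).choose i : ℝ) := by
      have := Nat.choose_mul (n := k) (Nat.le_add_right m i)
      have h3 : m + i - m = i := by omega
      rw [h3] at this
      exact_mod_cast congrArg (Nat.cast (R := ℝ)) this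
    unfold binomW
    have h4 : m + i - m = i := by omega
    have h5 : k - (m+i) = (k-m) - i := by omega
    rw [h4, h5]
    linear_combination ((-1:ℝ)^(k-m-i) * p^m * (1-p)^i * f m) * hch
  rw [Finset.sum_congr rfl e2, ← Finset.mul_sum]
  have e3 : ∑ i ∈ range ((k-m)+1), (1-p)^i * (-1:ℝ)^((k-m)-i) * ((k-m).choose i)
      = ((1-p) + (-1))^(k-m) := (add_pow (1-p) (-1) (k-m)).symm
  rw [e3]
  have e4 : ((1-p) + (-1:ℝ)) = -p := by ring
  rw [e4, neg_pow]
  have e5 : p^m * p^(k-m) = p^k := by rw [← pow_add]; congr 1; omega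
  linear_combination ((-1:ℝ)^(k-m) * (k.choose m:ℝ) * f m) * e5

theorem probDegFubini_of_bernoulli
    {Ω : Type*} [MeasurableSpace Ω] (μ : Measure Ω) [IsProbabilityMeasure μ]
    (Y : ℕ → Ω → ℝ) (lam : ℝ)
    (hmeas : ∀ j, Measurable (Y j))
    (hindep : iIndepFun Y μ)
    (hident : ∀ j, IdentDistrib (Y j) (Y 0) μ μ)
    (p : ℝ) (hp0 : 0 ≤ p) (hp1 : p ≤ 1)
    (hY1 : μ {ω | Y 0 ω = 1} = ENNReal.ofReal p)
    (hY0 : μ {ω | Y 0 ω = 0} = ENNReal.ofReal (1 - p))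
    (n : ℕ) (x : ℝ) :
    probDegFubini μ Y lam n x = degFubini lam n (x * p) := by
  -- measurability of partial sums
  have hSmeas : ∀ j, Measurable (partialSum Y j) := by
    intro j
    unfold partialSum
    exact Finset.measurable_sum _ (fun i _ => hmeas i)
  -- each Y j has the same one-point probabilities
  have hYv : ∀ (j : ℕ) (v : ℝ), μ {ω | Y j ω = v} = μ {ω | Y 0 ω = v} := by
    intro j v
    have h1 : μ (Y j ⁻¹' {v}) = μ (Y 0 ⁻¹' {v}) := by
      rw [← Measure.map_apply (hmeas j) (measurableSet_singleton v),
        ← Measure.map_apply (hmeas 0) (measurableSet_singleton v), (hident j).map_eq]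
    simpa [Set.preimage, Set.mem_singleton_iff] using h1
  have hYj1 : ∀ j, μ {ω | Y j ω = 1} = ENNReal.ofReal p := fun j => by rw [hYv j 1, hY1]
  have hYj0 : ∀ j, μ {ω | Y j ω = 0} = ENNReal.ofReal (1 - p) := fun j => by rw [hYv j 0, hY0]
  -- a.e. each Y j is 0 or 1
  have hbad : ∀ j, μ {ω | ¬(Y j ω = 0 ∨ Y j ω = 1)} = 0 := by
    intro j
    have hU : MeasurableSet ({ω | Y j ω = 0} ∪ {ω | Y j ω = 1}) :=
      ((hmeas j) (measurableSet_singleton 0)).union ((hmeas j) (measurableSet_singleton 1))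
    have hdisj : Disjoint {ω | Y j ω = 0} {ω | Y j ω = 1} := by
      rw [Set.disjoint_left]
      rintro ω (h0 : Y j ω = 0) (h1 : Y j ω = 1)
      rw [h0] at h1; norm_num at h1
    have hfull : μ ({ω | Y j ω = 0} ∪ {ω | Y j ω = 1}) = 1 := by
      rw [measure_union hdisj ((hmeas j) (measurableSet_singleton 1)), hYj0 j, hYj1 j,
        ← ENNReal.ofReal_add (by linarith) hp0]
      norm_num
    have hc := prob_compl_eq_zero_iff (μ := μ) hU |>.2 hfull
    have hset : {ω | ¬(Y j ω = 0 ∨ Y j ω = 1)} = ({ω | Y j ω = 0} ∪ {ω | Y j ω = 1})ᶜ := by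
      ext ω; simp [Set.compl_def]
    rw [hset]; exact hc
  have hGc : μ {ω | ¬ ∀ i, Y i ω = 0 ∨ Y i ω = 1} = 0 := by
    have hsub : {ω | ¬ ∀ i, Y i ω = 0 ∨ Y i ω = 1} ⊆ ⋃ i, {ω | ¬(Y i ω = 0 ∨ Y i ω = 1)} := by
      intro ω hω
      push_neg at hω
      obtain ⟨i, hi⟩ := hω
      exact Set.mem_iUnion.2 ⟨i, by push_neg; exact hi⟩
    exact measure_mono_null hsub (measure_iUnion_null (fun i => hbad i))
  -- negative values impossible
  have hneg : ∀ (j : ℕ) (c : ℝ), c < 0 → μ {ω | partialSum Y j ω = c} = 0 := by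
    intro j c hc
    refine measure_mono_null ?_ hGc
    intro ω hω
    simp only [Set.mem_setOf_eq] at hω ⊢
    intro hall
    have h : 0 ≤ partialSum Y j ω := by
      apply Finset.sum_nonneg
      intro i _
      rcases hall i with h | h <;> rw [h] <;> norm_num
    rw [hω] at h; linarith
  -- independence of partial sum and next variable
  have hprod : ∀ (j : ℕ) (c v : ℝ),
      μ ({ω | partialSum Y j ω = c} ∩ {ω | Y j ω = v})
        = μ {ω | partialSum Y j ω = c} * μ {ω | Y j ω = v} := by
    intro j c v
    have hind : IndepFun (partialSum Y j) (Y j) μ := by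
      have h := hindep.indepFun_sum_range_succ hmeas j
      have heq : partialSum Y j = ∑ i ∈ Finset.range j, Y i := by
        funext ω; simp [partialSum, Finset.sum_apply]
      rwa [heq]
    have h := hind.measure_inter_preimage_eq_mul (s := {c}) (t := {v})
      (measurableSet_singleton c) (measurableSet_singleton v)
    simpa [Set.preimage, Set.mem_singleton_iff] using h
  -- the binomial distribution of partial sums
  have hbinom : ∀ (j m : ℕ),
      μ {ω | partialSum Y j ω = (m : ℝ)} = ENNReal.ofReal (binomW p j m) := by
    intro j
    induction j with
    | zero =>
      intro m
      have h0 : ∀ ω, partialSum Y 0 ω = 0 := fun ω => by simp [partialSum]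
      cases m with
      | zero =>
        have h : {ω | partialSum Y 0 ω = ((0:ℕ) : ℝ)} = Set.univ := by
          ext ω; simp [h0 ω]
        rw [h]
        simp [binomW]
      | succ m =>
        have h : {ω | partialSum Y 0 ω = ((m+1:ℕ) : ℝ)} = ∅ := by
          ext ω
          simp only [Set.mem_setOf_eq, Set.mem_empty_iff_false, iff_false, h0 ω]
          push_cast
          intro h; linarith
        rw [h]
        simp [binomW]
    | succ j ih =>
      intro m
      set A := {ω | partialSum Y (j+1) ω = (m : ℝ)} with hA
      set U := {ω | Y j ω = 0} ∪ {ω | Y j ω = 1} with hUdef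
      have hU : MeasurableSet U :=
        ((hmeas j) (measurableSet_singleton 0)).union ((hmeas j) (measurableSet_singleton 1))
      have hAU : μ A = μ (A ∩ U) := by
        rw [← measure_inter_add_diff A hU]
        have h : μ (A \ U) = 0 := by
          refine measure_mono_null ?_ (hbad j)
          intro ω hω
          simp only [hUdef, Set.mem_diff, Set.mem_union, Set.mem_setOf_eq] at hω ⊢
          tauto
        rw [h, add_zero]
      have hstep : ∀ ω, partialSum Y (j+1) ω = partialSum Y j ω + Y j ω := by
        intro ω; simp [partialSum, Finset.sum_range_succ]
      have hsplit : A ∩ U = ({ω | partialSum Y j ω = (m:ℝ)} ∩ {ω | Y j ω = 0})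
          ∪ ({ω | partialSum Y j ω = (m:ℝ) - 1} ∩ {ω | Y j ω = 1}) := by
        ext ω
        simp only [hA, hUdef, Set.mem_inter_iff, Set.mem_union, Set.mem_setOf_eq, hstep ω]
        constructor
        · rintro ⟨hsum, h0 | h1⟩
          · left; constructor; linarith; exact h0
          · right; constructor; linarith; exact h1
        · rintro (⟨hs, h0⟩ | ⟨hs, h1⟩)
          · constructor; rw [hs, h0]; ring; left; exact h0
          · constructor; rw [hs, h1]; ring; right; exact h1
      have hdisj2 : Disjoint ({ω | partialSum Y j ω = (m:ℝ)} ∩ {ω | Y j ω = 0})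
          (({ω | partialSum Y j ω = (m:ℝ) - 1} ∩ {ω | Y j ω = 1})) := by
        rw [Set.disjoint_left]
        rintro ω ⟨_, h0⟩ ⟨_, h1⟩
        simp only [Set.mem_setOf_eq] at h0 h1
        rw [h0] at h1; norm_num at h1
      have hm2 : MeasurableSet ({ω | partialSum Y j ω = (m:ℝ) - 1} ∩ {ω | Y j ω = 1}) :=
        ((hSmeas j) (measurableSet_singleton _)).inter ((hmeas j) (measurableSet_singleton 1))
      rw [hAU, hsplit, measure_union hdisj2 hm2, hprod j, hprod j, hYj0 j, hYj1 j]
      cases m with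
      | zero =>
        rw [show ((0:ℕ):ℝ) - 1 = (-1 : ℝ) by norm_num, hneg j (-1) (by norm_num),
          zero_mul, add_zero, ih 0, ← ENNReal.ofReal_mul (binomW_nonneg hp0 hp1 j 0)]
        congr 1
        have h : binomW p (j+1) 0 = binomW p j 0 * (1 - p) := by
          simp [binomW, pow_succ]
        rw [h]
      | succ m =>
        rw [show ((m+1:ℕ):ℝ) - 1 = ((m:ℕ) : ℝ) by push_cast; ring, ih (m+1), ih m,
          ← ENNReal.ofReal_mul (binomW_nonneg hp0 hp1 j (m+1)),
          ← ENNReal.ofReal_mul (binomW_nonneg hp0 hp1 j m),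
          ← ENNReal.ofReal_add (mul_nonneg (binomW_nonneg hp0 hp1 j (m+1)) (by linarith))
            (mul_nonneg (binomW_nonneg hp0 hp1 j m) hp0)]
        congr 1
        exact (binomW_succ p j m).symm
  -- values of partial sums on the good set
  have hrange : ∀ (j : ℕ) (ω : Ω), (∀ i, Y i ω = 0 ∨ Y i ω = 1) →
      ∃ c : ℕ, c ≤ j ∧ partialSum Y j ω = (c : ℝ) := by
    intro j
    induction j with
    | zero => exact fun ω _ => ⟨0, le_refl 0, by simp [partialSum]⟩
    | succ j ih =>
      intro ω h
      obtain ⟨c, hc, hsum⟩ := ih ω h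
      have hstep : partialSum Y (j+1) ω = partialSum Y j ω + Y j ω := by
        simp [partialSum, Finset.sum_range_succ]
      rcases h j with h0 | h1
      · exact ⟨c, by omega, by rw [hstep, h0, add_zero, hsum]⟩
      · exact ⟨c+1, by omega, by rw [hstep, h1, hsum]; push_cast; ring⟩
  -- the expectation formula
  have hae0 : ∀ᵐ ω ∂μ, ∀ i, Y i ω = 0 ∨ Y i ω = 1 := by
    rw [ae_iff]; exact hGc
  have hIntegral : ∀ j : ℕ, ∫ ω, degFallingFactorial lam n (partialSum Y j ω) ∂μ
      = ∑ m ∈ range (j+1), binomW p j m * degFallingFactorial lam n m := by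
    intro j
    have hae : ∀ᵐ ω ∂μ, degFallingFactorial lam n (partialSum Y j ω)
        = ∑ m ∈ range (j+1), Set.indicator {ω' | partialSum Y j ω' = (m:ℝ)}
            (fun _ => degFallingFactorial lam n m) ω := by
      filter_upwards [hae0] with ω hall
      obtain ⟨c, hcj, hc⟩ := hrange j ω hall
      have hc' : ω ∈ {ω' | partialSum Y j ω' = (c:ℝ)} := hc
      rw [hc, Finset.sum_eq_single c ?_ ?_, Set.indicator_of_mem hc']
      · intro m hm hmc
        apply Set.indicator_of_notMem
        intro hmem
        have h : partialSum Y j ω = (m:ℝ) := hmem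
        rw [hc] at h
        exact hmc (Nat.cast_injective h).symm
      · intro hcm
        exact absurd (Finset.mem_range.2 (by omega)) hcm
    have hms : ∀ m : ℕ, MeasurableSet {ω' | partialSum Y j ω' = (m:ℝ)} :=
      fun m => (hSmeas j) (measurableSet_singleton _)
    rw [integral_congr_ae hae, integral_finset_sum _
      (fun m _ => (integrable_const _).indicator (hms m))]
    refine Finset.sum_congr rfl fun m _ => ?_
    rw [integral_indicator_const _ (hms m), measureReal_def, hbinom j m,
      ENNReal.toReal_ofReal (binomW_nonneg hp0 hp1 j m), smul_eq_mul]
  -- the Stirling number identity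
  have hStir : ∀ k, probDegStirling2 μ Y lam n k = p^k * degStirling2 lam n k := by
    intro k
    unfold probDegStirling2 degStirling2
    rw [Finset.sum_congr rfl (fun j _ => by rw [hIntegral j]),
      key_alg p (fun m => degFallingFactorial lam n m) k]
    ring
  -- conclusion
  unfold probDegFubini degFubini
  refine Finset.sum_congr rfl fun k _ => ?_
  rw [hStir k, mul_pow]
  ring
end
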